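/- arXiv:2504.10206 — 3 statements merged into one kernel-verified Lean document; each statement's English description precedes it below -/
import Mathlib

section
/- Let d ∈ ℕ, d ≥ 1, let f : ℝ×ℝ^d → ℝ be a bounded measurable function, let r ∈ ℕ, 1 ≤ p, q < ∞ and δ ≥ 0. Then the averaged moduli over the boxes [−n,n]×[−n,n]^d converge to the global averaged modulus: lim_{n→∞} τ_r(f; δ; [−n,n]×[−n,n]^d)_{p,q} = τ_r(f; δ; ℝ×ℝ^d)_{p,q}. -/
open MeasureTheory Filter Set Asymptotics
open scoped ENNReal NNReal Topology

noncomputable section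

/-- The `r`-th finite difference of `f : ℝ × ℝ^d → ℝ` with step `h` in every coordinate:
`(Δ^r_{h,𝐡} f)(x,y) = ∑_{j=0}^r (-1)^{r-j} C(r,j) f(x+jh, y+j𝐡)` where `𝐡 = (h,…,h)`. -/
def fdiff (d r : ℕ) (h : ℝ) (f : ℝ × (Fin d → ℝ) → ℝ) (z : ℝ × (Fin d → ℝ)) : ℝ :=
  ∑ j ∈ Finset.range (r + 1),
    (-1 : ℝ) ^ (r - j) * (r.choose j : ℝ) * f (z.1 + j * h, fun i => z.2 i + j * h)

/-- The local modulus of smoothness of order `r` of `f` on the product domain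
`A × ∏ i, B i` at the point `z`, for `δ ≥ 0`. -/
def locMod (d r : ℕ) (A : Set ℝ) (B : Fin d → Set ℝ) (f : ℝ × (Fin d → ℝ) → ℝ)
    (δ : ℝ) (z : ℝ × (Fin d → ℝ)) : ℝ≥0∞ :=
  ⨆ (h : ℝ) (t : ℝ) (s : Fin d → ℝ)
    (_ : t ∈ Set.Icc (z.1 - r * δ / 2) (z.1 + r * δ / 2) ∩ A)
    (_ : t + r * h ∈ Set.Icc (z.1 - r * δ / 2) (z.1 + r * δ / 2) ∩ A)
    (_ : ∀ i, s i ∈ Set.Icc (z.2 i - r * δ / 2) (z.2 i + r * δ / 2) ∩ B i)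
    (_ : ∀ i, s i + r * h ∈ Set.Icc (z.2 i - r * δ / 2) (z.2 i + r * δ / 2) ∩ B i),
    ENNReal.ofReal |fdiff d r h f (t, s)|

/-- The `L^{p,q}`-averaged modulus of smoothness of order `r` of `f` on the product
domain `A × ∏ i, B i`:  `τ_r(f;δ;D)_{p,q} = ‖ω_r(f,·;δ;D)‖_{L^{p,q}(D)}`. -/
def tauMod (d r : ℕ) (p q : ℝ) (A : Set ℝ) (B : Fin d → Set ℝ)
    (f : ℝ × (Fin d → ℝ) → ℝ) (δ : ℝ) : ℝ≥0∞ :=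
  (∫⁻ x in A, (∫⁻ y in Set.univ.pi B, (locMod d r A B f δ (x, y)) ^ q) ^ (p / q)) ^ (1 / p)

section Auxiliary
open Metric
open scoped Topology

lemma oneD {z t a c : ℝ} :
    (t ∈ Set.Icc (z - c) (z + c) ∧ t + a ∈ Set.Icc (z - c) (z + c)) ↔
      |z - (t + a / 2)| ≤ c - |a| / 2 := by
  rcases abs_cases a with ⟨ha, ha'⟩ | ⟨ha, ha'⟩ <;>
    rw [ha] <;>
    simp only [Set.mem_Icc, abs_le] <;>
    constructor <;>
    rintro ⟨h1, h2⟩ <;>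
    constructor <;>
    first
      | linarith [h1.1, h1.2, h2.1, h2.2]
      | (constructor <;> linarith)

lemma memBall_iff {d : ℕ} {z : ℝ × (Fin d → ℝ)} {w : ℝ × (Fin d → ℝ)} {ρ : ℝ} (hρ : 0 ≤ ρ) :
    z ∈ closedBall w ρ ↔ |z.1 - w.1| ≤ ρ ∧ ∀ i, |z.2 i - w.2 i| ≤ ρ := by
  rw [mem_closedBall, Prod.dist_eq, max_le_iff, Real.dist_eq, dist_pi_le_iff hρ]
  simp only [Real.dist_eq]

variable {d r : ℕ} {f : ℝ × (Fin d → ℝ) → ℝ} {δ : ℝ}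

/-- center of the admissibility box of a witness -/
def wctr (d r : ℕ) (h t : ℝ) (s : Fin d → ℝ) : ℝ × (Fin d → ℝ) :=
  (t + r * h / 2, fun i => s i + r * h / 2)

/-- radius of the admissibility box of a witness -/
def wrad (r : ℕ) (δ h : ℝ) : ℝ := r * δ / 2 - |(r : ℝ) * h| / 2

lemma adm_iff {h t : ℝ} {s : Fin d → ℝ} {z : ℝ × (Fin d → ℝ)} :
    ((t ∈ Set.Icc (z.1 - r * δ / 2) (z.1 + r * δ / 2) ∩ Set.univ) ∧
     (t + r * h ∈ Set.Icc (z.1 - r * δ / 2) (z.1 + r * δ / 2) ∩ Set.univ) ∧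
     (∀ i, s i ∈ Set.Icc (z.2 i - r * δ / 2) (z.2 i + r * δ / 2) ∩ Set.univ) ∧
     (∀ i, s i + r * h ∈ Set.Icc (z.2 i - r * δ / 2) (z.2 i + r * δ / 2) ∩ Set.univ)) ↔
    z ∈ closedBall (wctr d r h t s) (wrad r δ h) := by
  simp only [Set.inter_univ, wctr, wrad]
  rcases le_or_gt 0 ((r : ℝ) * δ / 2 - |(r : ℝ) * h| / 2) with hρ | hρ
  · rw [memBall_iff hρ]
    constructor
    · rintro ⟨p1, p2, p3, p4⟩
      exact ⟨oneD.mp ⟨p1, p2⟩, fun i => oneD.mp ⟨p3 i, p4 i⟩⟩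
    · rintro ⟨q1, q2⟩
      exact ⟨(oneD.mpr q1).1, (oneD.mpr q1).2, fun i => (oneD.mpr (q2 i)).1,
        fun i => (oneD.mpr (q2 i)).2⟩
  · constructor
    · rintro ⟨p1, p2, _, _⟩
      exact absurd ((abs_nonneg _).trans (oneD.mp ⟨p1, p2⟩)) (by linarith)
    · intro hz
      exact absurd (dist_nonneg.trans hz) hρ.not_ge

lemma le_locMod {A : Set ℝ} {B : Fin d → Set ℝ} {z : ℝ × (Fin d → ℝ)} {h t : ℝ} {s : Fin d → ℝ}
    (p1 : t ∈ Set.Icc (z.1 - r * δ / 2) (z.1 + r * δ / 2) ∩ A)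
    (p2 : t + r * h ∈ Set.Icc (z.1 - r * δ / 2) (z.1 + r * δ / 2) ∩ A)
    (p3 : ∀ i, s i ∈ Set.Icc (z.2 i - r * δ / 2) (z.2 i + r * δ / 2) ∩ B i)
    (p4 : ∀ i, s i + r * h ∈ Set.Icc (z.2 i - r * δ / 2) (z.2 i + r * δ / 2) ∩ B i) :
    ENNReal.ofReal |fdiff d r h f (t, s)| ≤ locMod d r A B f δ z :=
  le_iSup_of_le h <| le_iSup_of_le t <| le_iSup_of_le s <| le_iSup_of_le p1 <|
    le_iSup_of_le p2 <| le_iSup_of_le p3 <| le_iSup_of_le p4 le_rfl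

lemma locMod_le {A : Set ℝ} {B : Fin d → Set ℝ} {z : ℝ × (Fin d → ℝ)} {X : ℝ≥0∞}
    (hX : ∀ h t s, (t ∈ Set.Icc (z.1 - r * δ / 2) (z.1 + r * δ / 2) ∩ A) →
      (t + r * h ∈ Set.Icc (z.1 - r * δ / 2) (z.1 + r * δ / 2) ∩ A) →
      (∀ i, s i ∈ Set.Icc (z.2 i - r * δ / 2) (z.2 i + r * δ / 2) ∩ B i) →
      (∀ i, s i + r * h ∈ Set.Icc (z.2 i - r * δ / 2) (z.2 i + r * δ / 2) ∩ B i) →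
      ENNReal.ofReal |fdiff d r h f (t, s)| ≤ X) :
    locMod d r A B f δ z ≤ X :=
  iSup_le fun h => iSup_le fun t => iSup_le fun s => iSup_le fun p1 => iSup_le fun p2 =>
    iSup_le fun p3 => iSup_le fun p4 => hX h t s p1 p2 p3 p4

lemma locMod_mono {A A' : Set ℝ} {B B' : Fin d → Set ℝ} (hA : A ⊆ A') (hB : ∀ i, B i ⊆ B' i)
    (z : ℝ × (Fin d → ℝ)) : locMod d r A B f δ z ≤ locMod d r A' B' f δ z :=
  locMod_le fun h t s p1 p2 p3 p4 =>
    le_locMod ⟨p1.1, hA p1.2⟩ ⟨p2.1, hA p2.2⟩ (fun i => ⟨(p3 i).1, hB i (p3 i).2⟩)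
      (fun i => ⟨(p4 i).1, hB i (p4 i).2⟩)

lemma lt_locMod_univ_iff {a : ℝ≥0∞} {z : ℝ × (Fin d → ℝ)} :
    a < locMod d r Set.univ (fun _ => Set.univ) f δ z ↔
      ∃ h t s, z ∈ closedBall (wctr d r h t s) (wrad r δ h) ∧
        a < ENNReal.ofReal |fdiff d r h f (t, s)| := by
  simp only [locMod, lt_iSup_iff, exists_prop]
  constructor
  · rintro ⟨h, t, s, p1, p2, p3, p4, hlt⟩
    exact ⟨h, t, s, adm_iff.mp ⟨p1, p2, p3, p4⟩, hlt⟩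
  · rintro ⟨h, t, s, hball, hlt⟩
    obtain ⟨p1, p2, p3, p4⟩ := adm_iff.mpr hball
    exact ⟨h, t, s, p1, p2, p3, p4, hlt⟩

lemma locMod_box_eq {m n : ℕ} {z : ℝ × (Fin d → ℝ)} (hz1 : |z.1| ≤ m) (hz2 : ∀ i, |z.2 i| ≤ m)
    (hmn : (m : ℝ) + r * δ / 2 ≤ n) :
    locMod d r (Set.Icc (-(n : ℝ)) n) (fun _ => Set.Icc (-(n : ℝ)) n) f δ z =
      locMod d r Set.univ (fun _ => Set.univ) f δ z := by
  refine le_antisymm (locMod_mono (fun x _ => trivial) (fun i x _ => trivial) z) ?_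
  refine locMod_le fun h t s p1 p2 p3 p4 => ?_
  have hz1' := abs_le.mp hz1
  have key : ∀ u : ℝ, ∀ v : ℝ, |v| ≤ m → u ∈ Set.Icc (v - r * δ / 2) (v + r * δ / 2) →
      u ∈ Set.Icc (-(n : ℝ)) n := by
    intro u v hv hu
    have hv' := abs_le.mp hv
    simp only [Set.mem_Icc] at hu ⊢
    constructor <;> linarith [hu.1, hu.2, hv'.1, hv'.2]
  exact le_locMod ⟨p1.1, key t z.1 hz1 p1.1⟩ ⟨p2.1, key _ z.1 hz1 p2.1⟩
    (fun i => ⟨(p3 i).1, key _ (z.2 i) (hz2 i) (p3 i).1⟩)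
    (fun i => ⟨(p4 i).1, key _ (z.2 i) (hz2 i) (p4 i).1⟩)
lemma memBallLt_iff {d : ℕ} {z : ℝ × (Fin d → ℝ)} {w : ℝ × (Fin d → ℝ)} {ρ : ℝ} (hρ : 0 < ρ) :
    z ∈ ball w ρ ↔ |z.1 - w.1| < ρ ∧ ∀ i, |z.2 i - w.2 i| < ρ := by
  rw [mem_ball, Prod.dist_eq, max_lt_iff, Real.dist_eq, dist_pi_lt_iff hρ]
  simp only [Real.dist_eq]

lemma density_null {d : ℕ} {ι : Sort*} (c : ι → ℝ × (Fin d → ℝ)) (R : ι → ℝ) {η : ℝ}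
    (hη : 0 < η) (hR : ∀ i, η ≤ R i) :
    volume ((⋃ i, closedBall (c i) (R i)) \ ⋃ i, ball (c i) (R i)) = 0 := by
  set U := ⋃ i, ball (c i) (R i) with hU
  have hUopen : IsOpen U := isOpen_iUnion fun i => isOpen_ball
  have besic := Besicovitch.ae_tendsto_measure_inter_div_of_measurableSet
    (volume : Measure (ℝ × (Fin d → ℝ))) hUopen.measurableSet
  rw [ae_iff] at besic
  refine measure_mono_null ?_ besic
  rintro x ⟨hxV, hxU⟩
  simp only [mem_setOf_eq]
  intro hT
  rw [Set.indicator_of_notMem hxU] at hT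
  set κ : ℝ≥0∞ := (2 : ℝ≥0∞)⁻¹ ^ (d + 1) with hκ
  have hκpos : 0 < κ := ENNReal.pow_pos (by simp) _
  -- the key lower bound on the density ratio
  have key : ∀ ρ : ℝ, 0 < ρ → ρ < η →
      κ ≤ volume (U ∩ closedBall x ρ) / volume (closedBall x ρ) := by
    intro ρ h0 hρη
    obtain ⟨i, hxi⟩ := mem_iUnion.mp hxV
    have hRpos : 0 < R i := hη.trans_le (hR i)
    obtain ⟨hco1, hco2⟩ := (memBall_iff hRpos.le).mp hxi
    -- the inner sub-box
    set I1 : Set ℝ := Set.Ioo (max ((c i).1 - R i) (x.1 - ρ)) (min ((c i).1 + R i) (x.1 + ρ))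
    set I2 : Fin d → Set ℝ := fun j =>
      Set.Ioo (max ((c i).2 j - R i) (x.2 j - ρ)) (min ((c i).2 j + R i) (x.2 j + ρ))
    have len_ge : ∀ a v : ℝ, |v - a| ≤ R i →
        ρ ≤ min (a + R i) (v + ρ) - max (a - R i) (v - ρ) := by
      intro a v hv
      have hv' := abs_le.mp hv
      rcases le_total (a + R i) (v + ρ) with h1 | h1 <;>
        rcases le_total (a - R i) (v - ρ) with h2 | h2 <;>
        rw [min_def, max_def] <;>
        split_ifs <;> linarith [hv'.1, hv'.2, hR i]
    have sub : I1 ×ˢ Set.univ.pi I2 ⊆ U ∩ closedBall x ρ := by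
      rintro ⟨u1, u2⟩ ⟨hu1, hu2⟩
      simp only [Set.mem_pi, Set.mem_univ, forall_true_left, I2] at hu2
      simp only [Set.mem_Ioo, I1] at hu1
      constructor
      · refine mem_iUnion.mpr ⟨i, (memBallLt_iff hRpos).mpr ⟨?_, fun j => ?_⟩⟩
        · have := le_max_left ((c i).1 - R i) (x.1 - ρ)
          have := min_le_left ((c i).1 + R i) (x.1 + ρ)
          rw [abs_lt]; constructor <;> simp only [] <;> linarith [hu1.1, hu1.2]
        · have h' := hu2 j
          simp only [Set.mem_Ioo] at h'
          have := le_max_left ((c i).2 j - R i) (x.2 j - ρ)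
          have := min_le_left ((c i).2 j + R i) (x.2 j + ρ)
          rw [abs_lt]; constructor <;> linarith [h'.1, h'.2]
      · refine (memBall_iff h0.le).mpr ⟨?_, fun j => ?_⟩
        · have := le_max_right ((c i).1 - R i) (x.1 - ρ)
          have := min_le_right ((c i).1 + R i) (x.1 + ρ)
          rw [abs_le]; constructor <;> linarith [hu1.1, hu1.2]
        · have h' := hu2 j
          simp only [Set.mem_Ioo] at h'
          have := le_max_right ((c i).2 j - R i) (x.2 j - ρ)
          have := min_le_right ((c i).2 j + R i) (x.2 j + ρ)
          rw [abs_le]; constructor <;> linarith [h'.1, h'.2]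
    -- volume of the sub-box
    have volsub : ENNReal.ofReal ρ ^ (d + 1) ≤ volume (U ∩ closedBall x ρ) := by
      refine le_trans ?_ (measure_mono sub)
      rw [show (volume : Measure (ℝ × (Fin d → ℝ))) = (volume : Measure ℝ).prod volume from
        Measure.volume_eq_prod ℝ (Fin d → ℝ), Measure.prod_prod, MeasureTheory.volume_pi_pi]
      have h1 : ENNReal.ofReal ρ ≤ volume I1 := by
        rw [Real.volume_Ioo]
        exact ENNReal.ofReal_le_ofReal (by linarith [len_ge (c i).1 x.1 hco1])
      have h2 : ∀ j, ENNReal.ofReal ρ ≤ volume (I2 j) := by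
        intro j
        rw [Real.volume_Ioo]
        exact ENNReal.ofReal_le_ofReal (by linarith [len_ge ((c i).2 j) (x.2 j) (hco2 j)])
      calc ENNReal.ofReal ρ ^ (d + 1)
          = ENNReal.ofReal ρ * ∏ _j : Fin d, ENNReal.ofReal ρ := by
            simp [pow_succ, Finset.prod_const, mul_comm]
        _ ≤ volume I1 * ∏ j : Fin d, volume (I2 j) :=
            mul_le_mul' h1 (Finset.prod_le_prod' fun j _ => h2 j)
    -- volume of the ball
    have volball : volume (closedBall x ρ) = ENNReal.ofReal (2 * ρ) ^ (d + 1) := by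
      rw [show closedBall x ρ = closedBall x.1 ρ ×ˢ closedBall x.2 ρ from by
            rw [← closedBall_prod_same],
        show (volume : Measure (ℝ × (Fin d → ℝ))) = (volume : Measure ℝ).prod volume from
          Measure.volume_eq_prod ℝ (Fin d → ℝ), Measure.prod_prod, Real.volume_closedBall]
      rw [show closedBall x.2 ρ = Set.univ.pi fun j => closedBall (x.2 j) ρ from by
            rw [closedBall_pi _ h0.le],
        MeasureTheory.volume_pi_pi]
      simp [Real.volume_closedBall, pow_succ, mul_comm]
    -- conclude
    rw [volball]
    rw [ENNReal.le_div_iff_mul_le (Or.inl ?_) (Or.inl ?_)]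
    · calc κ * ENNReal.ofReal (2 * ρ) ^ (d + 1)
          = ((2 : ℝ≥0∞)⁻¹ * ENNReal.ofReal (2 * ρ)) ^ (d + 1) := by rw [hκ, mul_pow]
        _ = ENNReal.ofReal ρ ^ (d + 1) := by
            congr 1
            rw [ENNReal.ofReal_mul (by norm_num : (0:ℝ) ≤ 2)]
            rw [show ENNReal.ofReal (2:ℝ) = 2 by simp]
            rw [← mul_assoc, ENNReal.inv_mul_cancel (by norm_num) (by norm_num), one_mul]
        _ ≤ volume (U ∩ closedBall x ρ) := volsub
    · exact pow_ne_zero _ (ne_of_gt (ENNReal.ofReal_pos.mpr (by linarith)))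
    · exact ENNReal.pow_ne_top ENNReal.ofReal_ne_top
  -- contradiction with convergence to 0
  have hev1 : ∀ᶠ ρ in 𝓝[>] (0:ℝ),
      volume (U ∩ closedBall x ρ) / volume (closedBall x ρ) < κ := by
    have : Set.Iio κ ∈ 𝓝 (0 : ℝ≥0∞) := Iio_mem_nhds hκpos
    exact hT this
  have hev2 : ∀ᶠ ρ in 𝓝[>] (0:ℝ), ρ ∈ Set.Ioo (0:ℝ) η :=
    Ioo_mem_nhdsGT_of_mem ⟨le_refl 0, hη⟩
  obtain ⟨ρ, h1, h2⟩ := (hev1.and hev2).exists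
  exact absurd (key ρ h2.1 h2.2) (not_le.mpr h1)
/-- the "degenerate-step" part of the local modulus -/
def gEfun (d r : ℕ) (f : ℝ × (Fin d → ℝ) → ℝ) (δ : ℝ) (z : ℝ × (Fin d → ℝ)) : ℝ≥0∞ :=
  max (ENNReal.ofReal |fdiff d r δ f (z.1 + -(r * δ / 2), fun i => z.2 i + -(r * δ / 2))|)
      (ENNReal.ofReal |fdiff d r (-δ) f (z.1 + r * δ / 2, fun i => z.2 i + r * δ / 2)|)

lemma measurable_fdiff_shift {d r : ℕ} {f : ℝ × (Fin d → ℝ) → ℝ} (hm : Measurable f) (h a : ℝ) :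
    Measurable fun z : ℝ × (Fin d → ℝ) =>
      ENNReal.ofReal |fdiff d r h f (z.1 + a, fun i => z.2 i + a)| := by
  apply ENNReal.measurable_ofReal.comp
  apply Measurable.abs
  unfold fdiff
  apply Finset.measurable_sum
  intro j _
  apply Measurable.const_mul
  apply hm.comp
  apply Measurable.prodMk
  · exact (measurable_fst.add_const a).add_const _
  · exact measurable_pi_lambda _ fun i => by
      dsimp only; exact ((((measurable_pi_apply i : Measurable fun g : Fin d → ℝ => g i)).comp measurable_snd).add_const a).add_const _

lemma measurable_gEfun {d r : ℕ} {f : ℝ × (Fin d → ℝ) → ℝ} {δ : ℝ} (hm : Measurable f) :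
    Measurable (gEfun d r f δ) :=
  (measurable_fdiff_shift hm δ _).max (measurable_fdiff_shift hm (-δ) _)

lemma gEfun_le {d r : ℕ} {f : ℝ × (Fin d → ℝ) → ℝ} {δ : ℝ} (hδ : 0 ≤ δ)
    (z : ℝ × (Fin d → ℝ)) :
    gEfun d r f δ z ≤ locMod d r Set.univ (fun _ => Set.univ) f δ z := by
  have hrδ : 0 ≤ (r : ℝ) * δ := mul_nonneg (Nat.cast_nonneg r) hδ
  apply max_le
  · have := le_locMod (d := d) (r := r) (f := f) (δ := δ)
      (z := z) (h := δ) (t := z.1 + -(r * δ / 2)) (s := fun i => z.2 i + -(r * δ / 2))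
      ⟨by simp only [Set.mem_Icc]; constructor <;> linarith, Set.mem_univ _⟩
      ⟨by simp only [Set.mem_Icc]; constructor <;> linarith, Set.mem_univ _⟩
      (fun i => ⟨by simp only [Set.mem_Icc]; constructor <;> linarith, Set.mem_univ _⟩)
      (fun i => ⟨by simp only [Set.mem_Icc]; constructor <;> linarith, Set.mem_univ _⟩)
    exact this
  · have := le_locMod (d := d) (r := r) (f := f) (δ := δ)
      (z := z) (h := -δ) (t := z.1 + r * δ / 2) (s := fun i => z.2 i + r * δ / 2)
      ⟨by simp only [Set.mem_Icc]; constructor <;> linarith, Set.mem_univ _⟩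
      ⟨by simp only [Set.mem_Icc, mul_neg]; constructor <;> linarith, Set.mem_univ _⟩
      (fun i => ⟨by simp only [Set.mem_Icc]; constructor <;> linarith, Set.mem_univ _⟩)
      (fun i => ⟨by simp only [Set.mem_Icc, mul_neg]; constructor <;> linarith, Set.mem_univ _⟩)
    exact this

lemma witness_deg {d r : ℕ} {f : ℝ × (Fin d → ℝ) → ℝ} {δ : ℝ} {a : ℝ≥0∞}
    (hr : 1 ≤ r) (hδ : 0 ≤ δ) {z : ℝ × (Fin d → ℝ)} {h t : ℝ} {s : Fin d → ℝ}
    (hh : |h| = δ) (hball : z ∈ closedBall (wctr d r h t s) (wrad r δ h))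
    (hlt : a < ENNReal.ofReal |fdiff d r h f (t, s)|) : a < gEfun d r f δ z := by
  have habs : |(r : ℝ) * h| = r * δ := by
    rw [abs_mul, Nat.abs_cast, hh]
  have hrad : wrad r δ h = 0 := by simp [wrad, habs]
  rw [hrad, Metric.closedBall_zero, Set.mem_singleton_iff] at hball
  have hz1 : z.1 = t + r * h / 2 := congrArg Prod.fst hball
  have hz2 : ∀ i, z.2 i = s i + r * h / 2 := fun i => congrFun (congrArg Prod.snd hball) i
  rcases (abs_eq hδ).mp hh with heq | heq
  · rw [heq] at hz1 hz2 hlt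
    refine lt_of_lt_of_le hlt (le_trans (le_of_eq ?_) (le_max_left _ _))
    congr 1
    have ht' : t = z.1 + -(r * δ / 2) := by rw [hz1]; ring
    have hs' : s = fun i => z.2 i + -(r * δ / 2) := by
      funext i; rw [hz2 i]; ring
    rw [ht', hs']
  · rw [heq] at hz1 hz2 hlt
    refine lt_of_lt_of_le hlt (le_trans (le_of_eq ?_) (le_max_right _ _))
    congr 1
    have ht' : t = z.1 + r * δ / 2 := by rw [hz1]; ring
    have hs' : s = fun i => z.2 i + r * δ / 2 := by
      funext i; rw [hz2 i]; ring
    rw [ht', hs']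

lemma aemeasurable_locMod_univ {d r : ℕ} {f : ℝ × (Fin d → ℝ) → ℝ} {δ : ℝ}
    (hm : Measurable f) (hr : 1 ≤ r) (hδ : 0 ≤ δ) :
    AEMeasurable (locMod d r Set.univ (fun _ => Set.univ) f δ) volume := by
  have hrpos : (0 : ℝ) < r := by exact_mod_cast Nat.lt_of_lt_of_le Nat.zero_lt_one hr
  have hgE := measurable_gEfun (d := d) (r := r) (δ := δ) hm
  have hsup : ∀ a : ℝ≥0∞,
      NullMeasurableSet {z | a < locMod d r Set.univ (fun _ => Set.univ) f δ z} volume := by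
    intro a
    rcases eq_or_lt_of_le hδ with hδ0 | hδpos
    · -- δ = 0 : the local modulus is `gEfun`
      have hset : {z | a < locMod d r Set.univ (fun _ => Set.univ) f δ z}
          = {z | a < gEfun d r f δ z} := by
        ext z
        simp only [Set.mem_setOf_eq]
        constructor
        · intro hz
          obtain ⟨h, t, s, hball, hlt⟩ := lt_locMod_univ_iff.mp hz
          have h0 : 0 ≤ wrad r δ h := dist_nonneg.trans hball
          have hh : |h| = δ := by
            have : |(r : ℝ) * h| ≤ r * δ := by
              simp only [wrad] at h0; linarith
            rw [abs_mul, Nat.abs_cast] at this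
            have h1 : |h| ≤ δ := le_of_mul_le_mul_left (by linarith) hrpos
            have h2 : 0 ≤ |h| := abs_nonneg h
            linarith [hδ0]
          exact witness_deg hr hδ hh hball hlt
        · intro hz
          exact lt_of_lt_of_le hz (gEfun_le hδ z)
      rw [hset]
      exact (measurableSet_lt measurable_const hgE).nullMeasurableSet
    · -- δ > 0
      have hset : {z | a < locMod d r Set.univ (fun _ => Set.univ) f δ z}
          = {z | a < gEfun d r f δ z} ∪
            ⋃ (k : ℕ), ⋃ (w : ℝ × ℝ × (Fin d → ℝ))
              (_ : |w.1| ≤ δ - δ / (k + 2) ∧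
                a < ENNReal.ofReal |fdiff d r w.1 f (w.2.1, w.2.2)|),
              closedBall (wctr d r w.1 w.2.1 w.2.2) (wrad r δ w.1) := by
        ext z
        simp only [Set.mem_setOf_eq, Set.mem_union, Set.mem_iUnion]
        constructor
        · intro hz
          obtain ⟨h, t, s, hball, hlt⟩ := lt_locMod_univ_iff.mp hz
          rcases lt_trichotomy |h| δ with hlt' | heq | hgt
          · right
            obtain ⟨k, hk⟩ := exists_nat_gt (δ / (δ - |h|))
            refine ⟨k, (h, t, s), ⟨?_, hlt⟩, hball⟩
            have hpos : 0 < δ - |h| := by linarith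
            have h2 : δ < (δ - |h|) * k := by
              rw [div_lt_iff₀ hpos] at hk; linarith [hk]
            have h3 : δ / (k + 2) < δ - |h| := by
              rw [div_lt_iff₀ (by positivity)]
              nlinarith [hpos.le, (Nat.cast_nonneg k : (0:ℝ) ≤ k)]
            linarith
          · exact Or.inl (witness_deg hr hδ heq hball hlt)
          · exfalso
            have h0 : 0 ≤ wrad r δ h := dist_nonneg.trans hball
            simp only [wrad, abs_mul, Nat.abs_cast] at h0
            nlinarith
        · rintro (hz | ⟨k, w, ⟨hw1, hw2⟩, hball⟩)
          · exact lt_of_lt_of_le hz (gEfun_le hδ z)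
          · exact lt_locMod_univ_iff.mpr ⟨w.1, w.2.1, w.2.2, hball, hw2⟩
      rw [hset]
      apply NullMeasurableSet.union
      · exact (measurableSet_lt measurable_const hgE).nullMeasurableSet
      · apply NullMeasurableSet.iUnion
        intro k
        set P : ℝ × ℝ × (Fin d → ℝ) → Prop := fun w =>
          |w.1| ≤ δ - δ / (k + 2) ∧
            a < ENNReal.ofReal |fdiff d r w.1 f (w.2.1, w.2.2)| with hP
        have hrw : (⋃ (w : ℝ × ℝ × (Fin d → ℝ)) (_ : P w),
            closedBall (wctr d r w.1 w.2.1 w.2.2) (wrad r δ w.1)) =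
            ⋃ (w : Subtype P), closedBall (wctr d r w.1.1 w.1.2.1 w.1.2.2) (wrad r δ w.1.1) := by
          rw [Set.iUnion_subtype]
        rw [hrw]
        set η : ℝ := (r : ℝ) * (δ / (k + 2)) / 2 with hη
        have hηpos : 0 < η := by positivity
        have hradge : ∀ w : Subtype P, η ≤ wrad r δ w.1.1 := by
          rintro ⟨⟨h, t, s⟩, hw⟩
          simp only [wrad, abs_mul, Nat.abs_cast]
          have h1 : |h| ≤ δ - δ / (k + 2) := hw.1
          have h2 : (r : ℝ) * |h| ≤ r * (δ - δ / (k + 2)) :=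
            mul_le_mul_of_nonneg_left h1 (Nat.cast_nonneg r)
          simp only [hη]
          nlinarith
        have hcover : (⋃ (w : Subtype P),
              closedBall (wctr d r w.1.1 w.1.2.1 w.1.2.2) (wrad r δ w.1.1)) =
            (⋃ (w : Subtype P), ball (wctr d r w.1.1 w.1.2.1 w.1.2.2) (wrad r δ w.1.1)) ∪
            ((⋃ (w : Subtype P), closedBall (wctr d r w.1.1 w.1.2.1 w.1.2.2) (wrad r δ w.1.1)) \
             (⋃ (w : Subtype P), ball (wctr d r w.1.1 w.1.2.1 w.1.2.2) (wrad r δ w.1.1))) :=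
          (Set.union_diff_cancel (Set.iUnion_mono fun w => ball_subset_closedBall)).symm
        rw [hcover]
        apply NullMeasurableSet.union
        · exact (isOpen_iUnion fun w => isOpen_ball).measurableSet.nullMeasurableSet
        · exact NullMeasurableSet.of_null (density_null _ _ hηpos hradge)
  have hnull : NullMeasurable (locMod d r Set.univ (fun _ => Set.univ) f δ) volume := by
    have : @Measurable (NullMeasurableSpace (ℝ × (Fin d → ℝ)) volume) ℝ≥0∞ _ _
        (locMod d r Set.univ (fun _ => Set.univ) f δ) :=
      measurable_of_Ioi fun a => hsup a
    exact this
  exact hnull.aemeasurable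

variable {d r : ℕ} {p q : ℝ} {f : ℝ × (Fin d → ℝ) → ℝ} {δ : ℝ}

/-- outer truncation interval -/
def II (n : ℕ) : Set ℝ := Set.Icc (-(n : ℝ)) n

/-- inner truncation box -/
def JJ (d : ℕ) (n : ℕ) : Set (Fin d → ℝ) := Set.univ.pi fun _ : Fin d => Set.Icc (-(n : ℝ)) n

/-- truncated inner integral of the global local modulus -/
def WW (d r : ℕ) (q : ℝ) (f : ℝ × (Fin d → ℝ) → ℝ) (δ : ℝ) (k : ℕ) (x : ℝ) : ℝ≥0∞ :=
  ∫⁻ y in JJ d k, (locMod d r Set.univ (fun _ => Set.univ) f δ (x, y)) ^ q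

/-- truncated inner integral, raised to the power `p/q` -/
def HH (d r : ℕ) (p q : ℝ) (f : ℝ × (Fin d → ℝ) → ℝ) (δ : ℝ) (k : ℕ) (x : ℝ) : ℝ≥0∞ :=
  WW d r q f δ k x ^ (p / q)

/-- full inner integral of the global local modulus -/
def WI (d r : ℕ) (q : ℝ) (f : ℝ × (Fin d → ℝ) → ℝ) (δ : ℝ) (x : ℝ) : ℝ≥0∞ :=
  ∫⁻ y, (locMod d r Set.univ (fun _ => Set.univ) f δ (x, y)) ^ q

/-- full inner integral, raised to the power `p/q` -/
def HI (d r : ℕ) (p q : ℝ) (f : ℝ × (Fin d → ℝ) → ℝ) (δ : ℝ) (x : ℝ) : ℝ≥0∞ :=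
  WI d r q f δ x ^ (p / q)

/-- the `p`-th power of the truncated averaged modulus -/
def TB (d r : ℕ) (p q : ℝ) (f : ℝ × (Fin d → ℝ) → ℝ) (δ : ℝ) (n : ℕ) : ℝ≥0∞ :=
  ∫⁻ x in II n,
    (∫⁻ y in Set.univ.pi (fun _ : Fin d => Set.Icc (-(n : ℝ)) n),
      (locMod d r (II n) (fun _ => II n) f δ (x, y)) ^ q) ^ (p / q)

lemma II_mono : Monotone II := fun _ _ hkl =>
  Set.Icc_subset_Icc (neg_le_neg (Nat.cast_le.mpr hkl)) (Nat.cast_le.mpr hkl)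

lemma JJ_mono : Monotone (JJ d) := fun _ _ hkl =>
  Set.pi_mono fun _ _ => Set.Icc_subset_Icc (neg_le_neg (Nat.cast_le.mpr hkl)) (Nat.cast_le.mpr hkl)

lemma II_iUnion : ⋃ n, II n = Set.univ := by
  ext x
  simp only [Set.mem_iUnion, Set.mem_univ, iff_true, II, Set.mem_Icc]
  obtain ⟨n, hn⟩ := exists_nat_ge |x|
  exact ⟨n, abs_le.mp hn⟩

lemma JJ_iUnion : ⋃ n, JJ d n = Set.univ := by
  ext y
  simp only [Set.mem_iUnion, Set.mem_univ, iff_true, JJ, Set.mem_pi, Set.mem_Icc]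
  obtain ⟨n, hn⟩ := exists_nat_ge ‖y‖
  refine ⟨n, fun i _ => ?_⟩
  have h1 : |y i| ≤ ‖y‖ := by
    rw [← Real.norm_eq_abs]; exact norm_le_pi_norm y i
  constructor <;> linarith [abs_le.mp (h1.trans hn)]

lemma JJ_meas (d n : ℕ) : MeasurableSet (JJ d n) :=
  MeasurableSet.univ_pi fun _ => measurableSet_Icc

lemma WW_mono (x : ℝ) : Monotone fun k => WW d r q f δ k x := fun _ _ h =>
  lintegral_mono' (Measure.restrict_mono (JJ_mono h) le_rfl) le_rfl

lemma WI_eq_iSup (x : ℝ) : WI d r q f δ x = ⨆ k, WW d r q f δ k x := by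
  have h := setLIntegral_iUnion_of_directed (μ := volume)
    (fun y => (locMod d r Set.univ (fun _ => Set.univ) f δ (x, y)) ^ q)
    (JJ_mono (d := d)).directed_le
  rw [JJ_iUnion, Measure.restrict_univ] at h
  exact h

lemma HH_mono (hp : 1 ≤ p) (hq : 1 ≤ q) (x : ℝ) :
    Monotone fun k => HH d r p q f δ k x := fun _ _ h =>
  ENNReal.rpow_le_rpow (WW_mono x h) (div_nonneg (by linarith) (by linarith))

lemma HI_eq_iSup (hp : 1 ≤ p) (hq : 1 ≤ q) (x : ℝ) :
    HI d r p q f δ x = ⨆ k, HH d r p q f δ k x := by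
  have h1 : Tendsto (fun k => WW d r q f δ k x) atTop (𝓝 (⨆ k, WW d r q f δ k x)) :=
    tendsto_atTop_iSup (WW_mono x)
  have h2 : Tendsto (fun k => HH d r p q f δ k x) atTop
      (𝓝 ((⨆ k, WW d r q f δ k x) ^ (p / q))) :=
    ((ENNReal.continuous_rpow_const (y := p / q)).tendsto _).comp h1
  have h3 : Tendsto (fun k => HH d r p q f δ k x) atTop (𝓝 (⨆ k, HH d r p q f δ k x)) :=
    tendsto_atTop_iSup (HH_mono hp hq x)
  rw [HI, WI_eq_iSup x, tendsto_nhds_unique h2 h3]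

lemma HH_aemeas (hm : Measurable f) (hr : 1 ≤ r) (hδ : 0 ≤ δ) (k : ℕ) :
    AEMeasurable (HH d r p q f δ k) (volume : Measure ℝ) := by
  have hg : AEMeasurable (locMod d r Set.univ (fun _ => Set.univ) f δ) volume :=
    aemeasurable_locMod_univ hm hr hδ
  have hgq : AEMeasurable (fun z => (locMod d r Set.univ (fun _ => Set.univ) f δ z) ^ q)
      volume := (ENNReal.continuous_rpow_const (y := q)).measurable.comp_aemeasurable hg
  obtain ⟨g0, hg0m, hg0e⟩ := hgq
  rw [Measure.volume_eq_prod] at hg0e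
  have hg0e' := Measure.ae_ae_of_ae_prod hg0e
  have hW0 : Measurable fun x : ℝ => ∫⁻ y in JJ d k, g0 (x, y) :=
    Measurable.lintegral_prod_right' hg0m
  have hWe : WW d r q f δ k =ᵐ[volume] fun x => ∫⁻ y in JJ d k, g0 (x, y) := by
    filter_upwards [hg0e'] with x hx
    exact lintegral_congr_ae (ae_restrict_of_ae hx)
  have hWk : AEMeasurable (WW d r q f δ k) (volume : Measure ℝ) :=
    hW0.aemeasurable.congr hWe.symm
  exact (ENNReal.continuous_rpow_const (y := p / q)).measurable.comp_aemeasurable hWk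

lemma lint_HI (hm : Measurable f) (hr : 1 ≤ r) (hδ : 0 ≤ δ) (hp : 1 ≤ p) (hq : 1 ≤ q) :
    ∫⁻ x, HI d r p q f δ x = ⨆ k, ∫⁻ x, HH d r p q f δ k x := by
  calc ∫⁻ x, HI d r p q f δ x = ∫⁻ x, ⨆ k, HH d r p q f δ k x :=
        lintegral_congr (HI_eq_iSup hp hq)
    _ = ⨆ k, ∫⁻ x, HH d r p q f δ k x :=
        lintegral_iSup' (HH_aemeas hm hr hδ) (ae_of_all _ fun x => HH_mono hp hq x)

lemma TB_mono (hp : 1 ≤ p) (hq : 1 ≤ q) : Monotone (TB d r p q f δ) := by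
  intro n n' h
  refine lintegral_mono' (Measure.restrict_mono (II_mono h) le_rfl) fun x => ?_
  refine ENNReal.rpow_le_rpow ?_ (div_nonneg (by linarith) (by linarith))
  refine lintegral_mono'
    (Measure.restrict_mono (Set.pi_mono fun _ _ =>
      Set.Icc_subset_Icc (neg_le_neg (Nat.cast_le.mpr h)) (Nat.cast_le.mpr h)) le_rfl) fun y => ?_
  exact ENNReal.rpow_le_rpow
    (locMod_mono (II_mono h) (fun _ => II_mono h) _) (by linarith)

lemma TB_le (hp : 1 ≤ p) (hq : 1 ≤ q) (n : ℕ) :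
    TB d r p q f δ n ≤ ∫⁻ x, HI d r p q f δ x := by
  refine lintegral_mono' Measure.restrict_le_self fun x => ?_
  refine ENNReal.rpow_le_rpow ?_ (div_nonneg (by linarith) (by linarith))
  refine le_trans (lintegral_mono fun y => ?_) (lintegral_mono' Measure.restrict_le_self le_rfl)
  exact ENNReal.rpow_le_rpow
    (locMod_mono (Set.subset_univ _) (fun _ => Set.subset_univ _) _) (by linarith)

lemma step2a (hm : Measurable f) (hr : 1 ≤ r) (hδ : 0 ≤ δ) (hp : 1 ≤ p) (hq : 1 ≤ q)
    (m k : ℕ) :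
    ∫⁻ x in II m, HH d r p q f δ k x ≤ ⨆ n, TB d r p q f δ n := by
  have hpq0 : (0:ℝ) ≤ p / q := div_nonneg (by linarith) (by linarith)
  set M := max m k with hM
  set n := M + r * ⌈δ⌉₊ with hn
  have hcast : (M : ℝ) + r * δ / 2 ≤ n := by
    have h1 : δ ≤ ⌈δ⌉₊ := Nat.le_ceil δ
    have h2 : (n : ℝ) = M + r * ⌈δ⌉₊ := by rw [hn]; push_cast; ring
    have h3 : (r : ℝ) * δ ≤ r * ⌈δ⌉₊ := mul_le_mul_of_nonneg_left h1 (Nat.cast_nonneg r)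
    have h0 : 0 ≤ (r : ℝ) * δ := mul_nonneg (Nat.cast_nonneg r) hδ
    rw [h2]; linarith
  calc ∫⁻ x in II m, HH d r p q f δ k x
      ≤ ∫⁻ x in II M, HH d r p q f δ M x :=
        lintegral_mono' (Measure.restrict_mono (II_mono (le_max_left m k)) le_rfl)
          (fun x => ENNReal.rpow_le_rpow (WW_mono x (le_max_right m k)) hpq0)
    _ = ∫⁻ x in II M, (∫⁻ y in JJ d M,
          (locMod d r (II n) (fun _ => II n) f δ (x, y)) ^ q) ^ (p / q) := by
        apply lintegral_congr_ae
        filter_upwards [ae_restrict_mem measurableSet_Icc] with x hx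
        show WW d r q f δ M x ^ (p/q) = _
        congr 1
        apply lintegral_congr_ae
        filter_upwards [ae_restrict_mem (JJ_meas d M)] with y hy
        congr 1
        have hx' : |x| ≤ (M:ℝ) := abs_le.mpr hx
        have hy' : ∀ i, |y i| ≤ (M:ℝ) := fun i => abs_le.mpr (hy i (Set.mem_univ i))
        exact (locMod_box_eq hx' hy' hcast).symm
    _ ≤ TB d r p q f δ n := by
        refine lintegral_mono'
          (Measure.restrict_mono (II_mono (Nat.le_add_right M _)) le_rfl) fun x => ?_
        refine ENNReal.rpow_le_rpow ?_ hpq0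
        exact lintegral_mono' (Measure.restrict_mono
          (Set.pi_mono fun _ _ => Set.Icc_subset_Icc
            (neg_le_neg (Nat.cast_le.mpr (Nat.le_add_right M _)))
            (Nat.cast_le.mpr (Nat.le_add_right M _))) le_rfl) le_rfl
    _ ≤ ⨆ n, TB d r p q f δ n := le_iSup _ n

lemma step2 (hm : Measurable f) (hr : 1 ≤ r) (hδ : 0 ≤ δ) (hp : 1 ≤ p) (hq : 1 ≤ q) :
    ∫⁻ x, HI d r p q f δ x ≤ ⨆ n, TB d r p q f δ n := by
  rw [lint_HI hm hr hδ hp hq]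
  refine iSup_le fun k => ?_
  have h : ∫⁻ x, HH d r p q f δ k x = ⨆ m, ∫⁻ x in II m, HH d r p q f δ k x := by
    have h := setLIntegral_iUnion_of_directed (μ := volume)
      (HH d r p q f δ k) (II_mono).directed_le
    rw [II_iUnion, Measure.restrict_univ] at h
    exact h
  rw [h]
  exact iSup_le fun m => step2a hm hr hδ hp hq m k

end Auxiliary

/-- for a bounded measurable `f : ℝ × ℝ^d → ℝ`, the averaged moduli of
smoothness over the boxes `[-n,n] × [-n,n]^d` converge to the global averaged modulus. -/
theorem tauMod_box_tendsto_tauMod_global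
    (d : ℕ) (hd : 1 ≤ d) (f : ℝ × (Fin d → ℝ) → ℝ)
    (hmeas : Measurable f) (hbdd : ∃ M : ℝ, ∀ z, |f z| ≤ M)
    (r : ℕ) (hr : 1 ≤ r) (p q : ℝ) (hp : 1 ≤ p) (hq : 1 ≤ q)
    (δ : ℝ) (hδ : 0 ≤ δ) :
    Tendsto
      (fun n : ℕ =>
        tauMod d r p q (Set.Icc (-(n : ℝ)) (n : ℝ)) (fun _ => Set.Icc (-(n : ℝ)) (n : ℝ)) f δ)
      atTop
      (nhds (tauMod d r p q Set.univ (fun _ => Set.univ) f δ)) := by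
  have key : (⨆ n, TB d r p q f δ n) = ∫⁻ x, HI d r p q f δ x :=
    le_antisymm (iSup_le (TB_le hp hq)) (step2 hmeas hr hδ hp hq)
  have h1 : Tendsto (TB d r p q f δ) atTop (𝓝 (⨆ n, TB d r p q f δ n)) :=
    tendsto_atTop_iSup (TB_mono hp hq)
  rw [key] at h1
  have h2 : Tendsto (fun n => TB d r p q f δ n ^ (1 / p)) atTop
      (𝓝 ((∫⁻ x, HI d r p q f δ x) ^ (1 / p))) :=
    ((ENNReal.continuous_rpow_const (y := 1 / p)).tendsto _).comp h1
  have e1 : ∀ n : ℕ, tauMod d r p q (Set.Icc (-(n : ℝ)) n) (fun _ => Set.Icc (-(n : ℝ)) n) f δ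
      = TB d r p q f δ n ^ (1 / p) := fun n => rfl
  have e2 : tauMod d r p q Set.univ (fun _ => Set.univ) f δ
      = (∫⁻ x, HI d r p q f δ x) ^ (1 / p) := by
    unfold tauMod HI WI
    rw [Set.pi_univ]
    simp only [Measure.restrict_univ]
  rw [e2]
  simp only [e1]
  exact h2
end
end

section
/- Let d ∈ ℕ, d ≥ 1, let f ∈ L^{p,q}(ℝ×ℝ^d) with 1 ≤ p, q < ∞, let r ∈ ℕ and δ ≥ 0. Then the integral moduli over the boxes (−n,n)×(−n,n)^d converge to the global integral modulus: lim_{n→∞} ω_r(f; δ; L^{p,q}((−n,n)×(−n,n)^d)) = ω_r(f; δ; L^{p,q}(ℝ×ℝ^d)). -/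
open MeasureTheory Filter Set Asymptotics
open scoped ENNReal NNReal

noncomputable section

/-- The integral modulus of smoothness of order `r` of `f` on the open box
`(a,b) × ∏ i, (c i, d i)` in the mixed `L^{p,q}` norm. -/
def intModBox (d r : ℕ) (p q : ℝ) (a b : ℝ) (c dd : Fin d → ℝ)
    (f : ℝ × (Fin d → ℝ) → ℝ) (δ : ℝ) : ℝ≥0∞ :=
  ⨆ (h : ℝ) (_ : 0 ≤ h) (_ : h ≤ δ),
    (∫⁻ u in Set.Ioo a (b - r * h),
        (∫⁻ v in Set.univ.pi fun i => Set.Ioo (c i) (dd i - r * h),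
            (ENNReal.ofReal |fdiff d r h f (u, v)|) ^ q) ^ (p / q)) ^ (1 / p)

/-- The integral modulus of smoothness of order `r` of `f` on all of `ℝ × ℝ^d` in the
mixed `L^{p,q}` norm. -/
def intModGlobal (d r : ℕ) (p q : ℝ) (f : ℝ × (Fin d → ℝ) → ℝ) (δ : ℝ) : ℝ≥0∞ :=
  ⨆ (h : ℝ) (_ : 0 ≤ h) (_ : h ≤ δ),
    (∫⁻ u : ℝ, (∫⁻ v : Fin d → ℝ,
        (ENNReal.ofReal |fdiff d r h f (u, v)|) ^ q) ^ (p / q)) ^ (1 / p)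

lemma iSup_rpow_of_monotone (x : ℕ → ℝ≥0∞) (hx : Monotone x) {c : ℝ} (hc : 0 ≤ c) :
    (⨆ n, x n) ^ c = ⨆ n, x n ^ c := by
  have h1 : Tendsto x atTop (nhds (⨆ n, x n)) := tendsto_atTop_iSup hx
  have h2 : Tendsto (fun n => x n ^ c) atTop (nhds ((⨆ n, x n) ^ c)) :=
    (ENNReal.continuous_rpow_const.tendsto _).comp h1
  have h3 : Tendsto (fun n => x n ^ c) atTop (nhds (⨆ n, x n ^ c)) :=
    tendsto_atTop_iSup fun a b hab => ENNReal.rpow_le_rpow (hx hab) hc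
  exact tendsto_nhds_unique h2 h3

lemma iSup_setLintegral {α : Type*} [MeasurableSpace α] (μ : Measure α)
    (g : α → ℝ≥0∞) (hg : Measurable g) (S : ℕ → Set α) (hS : Monotone S)
    (hSm : ∀ n, MeasurableSet (S n)) (hcover : ∀ x, ∃ n, x ∈ S n) :
    (⨆ n, ∫⁻ x in S n, g x ∂μ) = ∫⁻ x, g x ∂μ := by
  have h1 : ∀ n, (∫⁻ x in S n, g x ∂μ) = ∫⁻ x, (S n).indicator g x ∂μ := fun n =>
    (lintegral_indicator (hSm n) g).symm
  have hmono : Monotone fun n => (S n).indicator g := fun a b hab x =>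
    Set.indicator_le_indicator_of_subset (hS hab) (fun _ => zero_le) x
  have hsup : ∀ x, (⨆ n, (S n).indicator g x) = g x := by
    intro x
    refine le_antisymm (iSup_le fun n => Set.indicator_le_self _ _ x) ?_
    obtain ⟨n, hn⟩ := hcover x
    refine le_trans ?_ (le_iSup _ n)
    rw [Set.indicator_of_mem hn]
  simp_rw [h1]
  rw [← lintegral_iSup (fun n => hg.indicator (hSm n)) hmono]
  exact lintegral_congr hsup

lemma key_lemma (d r : ℕ) (p q h : ℝ) (hp : 1 ≤ p) (hq : 1 ≤ q) (hh : 0 ≤ h)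
    (f : ℝ × (Fin d → ℝ) → ℝ) (hmeas : Measurable f) :
    Monotone (fun n : ℕ =>
      (∫⁻ u in Set.Ioo (-(n : ℝ)) ((n : ℝ) - r * h),
        (∫⁻ v in Set.univ.pi fun _ : Fin d => Set.Ioo (-(n : ℝ)) ((n : ℝ) - r * h),
            (ENNReal.ofReal |fdiff d r h f (u, v)|) ^ q) ^ (p / q)) ^ (1 / p)) ∧
    (⨆ n : ℕ, (∫⁻ u in Set.Ioo (-(n : ℝ)) ((n : ℝ) - r * h),
        (∫⁻ v in Set.univ.pi fun _ : Fin d => Set.Ioo (-(n : ℝ)) ((n : ℝ) - r * h),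
            (ENNReal.ofReal |fdiff d r h f (u, v)|) ^ q) ^ (p / q)) ^ (1 / p))
      = (∫⁻ u : ℝ, (∫⁻ v : Fin d → ℝ,
            (ENNReal.ofReal |fdiff d r h f (u, v)|) ^ q) ^ (p / q)) ^ (1 / p) := by
  have hp0 : (0 : ℝ) < p := lt_of_lt_of_le one_pos hp
  have hq0 : (0 : ℝ) < q := lt_of_lt_of_le one_pos hq
  have hpq : (0 : ℝ) ≤ p / q := div_nonneg hp0.le hq0.le
  have h1p : (0 : ℝ) ≤ 1 / p := by positivity
  have hrh : (0 : ℝ) ≤ r * h := mul_nonneg (Nat.cast_nonneg r) hh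
  -- the integrand
  set g : ℝ × (Fin d → ℝ) → ℝ≥0∞ := fun z => (ENNReal.ofReal |fdiff d r h f z|) ^ q with hgdef
  have hfd : Measurable (fdiff d r h f) := by
    unfold fdiff
    refine Finset.measurable_sum _ fun j _ => ?_
    exact Measurable.const_mul (hmeas.comp ((measurable_fst.add_const _).prodMk
      (measurable_pi_lambda _ fun i =>
        ((measurable_pi_apply i).comp measurable_snd).add_const _))) _
  have hg : Measurable g := (ENNReal.measurable_ofReal.comp hfd.abs).pow_const q
  set A : ℕ → Set ℝ := fun n => Set.Ioo (-(n : ℝ)) ((n : ℝ) - r * h) with hAdef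
  set B : ℕ → Set (Fin d → ℝ) :=
    fun n => Set.univ.pi fun _ : Fin d => Set.Ioo (-(n : ℝ)) ((n : ℝ) - r * h) with hBdef
  have hA : Monotone A := fun a b hab => Set.Ioo_subset_Ioo
    (neg_le_neg (Nat.cast_le.2 hab)) (sub_le_sub_right (Nat.cast_le.2 hab) _)
  have hB : Monotone B := fun a b hab => Set.pi_mono fun i _ => Set.Ioo_subset_Ioo
    (neg_le_neg (Nat.cast_le.2 hab)) (sub_le_sub_right (Nat.cast_le.2 hab) _)
  have hAm : ∀ n, MeasurableSet (A n) := fun n => measurableSet_Ioo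
  have hBm : ∀ n, MeasurableSet (B n) := fun n =>
    MeasurableSet.univ_pi fun i => measurableSet_Ioo
  have hAc : ∀ u : ℝ, ∃ n, u ∈ A n := by
    intro u
    obtain ⟨n, hn⟩ := exists_nat_gt (|u| + r * h)
    exact ⟨n, by
      constructor
      · nlinarith [abs_nonneg u, neg_abs_le u]
      · nlinarith [le_abs_self u]⟩
  have hBc : ∀ v : Fin d → ℝ, ∃ n, v ∈ B n := by
    intro v
    obtain ⟨n, hn⟩ := exists_nat_gt (‖v‖ + r * h)
    refine ⟨n, fun i _ => ?_⟩
    have h1 : |v i| ≤ ‖v‖ := by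
      have := norm_le_pi_norm v i
      rwa [Real.norm_eq_abs] at this
    constructor
    · nlinarith [abs_nonneg (v i), neg_abs_le (v i)]
    · nlinarith [le_abs_self (v i)]
  -- inner functions
  set Fn : ℕ → ℝ → ℝ≥0∞ := fun n u => (∫⁻ v in B n, g (u, v)) ^ (p / q) with hFndef
  set F : ℝ → ℝ≥0∞ := fun u => (∫⁻ v : Fin d → ℝ, g (u, v)) ^ (p / q) with hFdef
  have hFn_mono : ∀ u, Monotone fun n => Fn n u := fun u a b hab =>
    ENNReal.rpow_le_rpow (lintegral_mono_set (hB hab)) hpq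
  have hFn_le : ∀ n u, Fn n u ≤ F u := fun n u =>
    ENNReal.rpow_le_rpow (setLIntegral_le_lintegral _ _) hpq
  have hFn_sup : ∀ u, (⨆ n, Fn n u) = F u := by
    intro u
    have := iSup_setLintegral volume (fun v => g (u, v))
      (hg.comp (measurable_prodMk_left)) B hB hBm hBc
    rw [hFndef, hFdef]
    rw [← iSup_rpow_of_monotone (fun n => ∫⁻ v in B n, g (u, v))
      (fun a b hab => lintegral_mono_set (hB hab)) hpq, this]
  have hFn_meas : ∀ n, Measurable (Fn n) := by
    intro n
    have : Measurable fun u => ∫⁻ v in B n, g (u, v) :=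
      Measurable.lintegral_prod_right (f := fun u v => g (u, v)) hg
    exact this.pow_const _
  set s : ℕ → ℝ → ℝ≥0∞ := fun n => (A n).indicator (Fn n) with hsdef
  have hs_meas : ∀ n, Measurable (s n) := fun n => (hFn_meas n).indicator (hAm n)
  have hs_mono : Monotone s := by
    intro a b hab u
    by_cases hu : u ∈ A a
    · rw [hsdef]
      simp only
      rw [Set.indicator_of_mem hu, Set.indicator_of_mem (hA hab hu)]
      exact hFn_mono u hab
    · rw [hsdef]; simp only; rw [Set.indicator_of_notMem hu]; exact zero_le
  have hs_sup : ∀ u, (⨆ n, s n u) = F u := by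
    intro u
    refine le_antisymm (iSup_le fun n => (Set.indicator_le_self _ _ u).trans (hFn_le n u)) ?_
    rw [← hFn_sup u]
    refine iSup_le fun n => ?_
    obtain ⟨N, hN⟩ := hAc u
    have h1 : Fn n u ≤ Fn (max n N) u := hFn_mono u (le_max_left _ _)
    have h2 : s (max n N) u = Fn (max n N) u :=
      Set.indicator_of_mem (hA (le_max_right _ _) hN) _
    exact h1.trans (h2.ge.trans (le_iSup (fun n => s n u) (max n N)))
  set t : ℕ → ℝ≥0∞ := fun n => ∫⁻ u, s n u with htdef
  have ht_mono : Monotone t := fun a b hab => lintegral_mono fun u => hs_mono hab u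
  have hbox : ∀ n, (∫⁻ u in A n, Fn n u) = t n := fun n =>
    (lintegral_indicator (hAm n) (Fn n)).symm
  have ht_sup : (⨆ n, t n) = ∫⁻ u, F u := by
    rw [htdef]
    rw [← lintegral_iSup hs_meas hs_mono]
    exact lintegral_congr hs_sup
  constructor
  · intro a b hab
    simp only [hbox]
    have := ht_mono hab
    rw [← hbox a, ← hbox b] at this
    exact ENNReal.rpow_le_rpow this h1p
  · calc (⨆ n : ℕ, (∫⁻ u in A n, Fn n u) ^ (1 / p))
        = ⨆ n : ℕ, (t n) ^ (1 / p) := by simp only [hbox]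
      _ = (⨆ n, t n) ^ (1 / p) := (iSup_rpow_of_monotone t ht_mono h1p).symm
      _ = (∫⁻ u, F u) ^ (1 / p) := by rw [ht_sup]

/-- for `f ∈ L^{p,q}(ℝ×ℝ^d)`, the integral moduli of smoothness over the
boxes `(-n,n) × (-n,n)^d` converge to the global integral modulus as `n → ∞`. -/
theorem intModBox_tendsto_intModGlobal
    (d : ℕ) (hd : 1 ≤ d) (p q : ℝ) (hp : 1 ≤ p) (hq : 1 ≤ q)
    (f : ℝ × (Fin d → ℝ) → ℝ) (hmeas : Measurable f)
    (hLpq : (∫⁻ x : ℝ, (∫⁻ y : Fin d → ℝ,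
        (ENNReal.ofReal |f (x, y)|) ^ q) ^ (p / q)) ^ (1 / p) ≠ ⊤)
    (r : ℕ) (hr : 1 ≤ r) (δ : ℝ) (hδ : 0 ≤ δ) :
    Tendsto
      (fun n : ℕ =>
        intModBox d r p q (-(n : ℝ)) (n : ℝ) (fun _ => -(n : ℝ)) (fun _ => (n : ℝ)) f δ)
      atTop (nhds (intModGlobal d r p q f δ)) := by
  have hkey := fun (h : ℝ) (hh0 : 0 ≤ h) => key_lemma d r p q h hp hq hh0 f hmeas
  have hmono : Monotone (fun n : ℕ =>
      intModBox d r p q (-(n : ℝ)) (n : ℝ) (fun _ => -(n : ℝ)) (fun _ => (n : ℝ)) f δ) := by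
    intro a b hab
    simp only [intModBox]
    refine iSup_mono fun h => iSup_mono fun hh0 => iSup_mono fun hhδ => ?_
    exact (hkey h hh0).1 hab
  have hsup : (⨆ n : ℕ,
      intModBox d r p q (-(n : ℝ)) (n : ℝ) (fun _ => -(n : ℝ)) (fun _ => (n : ℝ)) f δ)
      = intModGlobal d r p q f δ := by
    simp only [intModBox, intModGlobal]
    refine le_antisymm ?_ ?_
    · refine iSup_le fun n => iSup_le fun h => iSup_le fun hh0 => iSup_le fun hhδ => ?_
      refine le_iSup_of_le h (le_iSup_of_le hh0 (le_iSup_of_le hhδ ?_))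
      rw [← (hkey h hh0).2]
      exact le_iSup (fun n : ℕ =>
        (∫⁻ u in Set.Ioo (-(n : ℝ)) ((n : ℝ) - r * h),
          (∫⁻ v in Set.univ.pi fun _ : Fin d => Set.Ioo (-(n : ℝ)) ((n : ℝ) - r * h),
              (ENNReal.ofReal |fdiff d r h f (u, v)|) ^ q) ^ (p / q)) ^ (1 / p)) n
    · refine iSup_le fun h => iSup_le fun hh0 => iSup_le fun hhδ => ?_
      rw [← (hkey h hh0).2]
      refine iSup_le fun n => ?_
      exact le_iSup_of_le n (le_iSup_of_le h (le_iSup_of_le hh0 (le_iSup_of_le hhδ le_rfl)))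
  rw [← hsup]
  exact tendsto_atTop_iSup hmono
end
end

section
/- Let d ∈ ℕ, d ≥ 1, 1 ≤ p, q < ∞, and let f : ℝ×ℝ^d → ℂ be measurable. Then f ∈ Λ^{p,q} if and only if there exists Δ* > 0 such that ‖f‖_{ℓ^{p,q}(Σ)} < ∞ for every admissible partition Σ of ℝ×ℝ^d whose lower mesh size satisfies Δ̲ ≥ Δ*. -/
open MeasureTheory Filter Set Asymptotics
open scoped ENNReal NNReal

noncomputable section

/-- An admissible partition of `ℝ × ℝ^d`: strictly increasing doubly-infinite sequences of
nodes in the first variable and in each of the `d` remaining variables, whose consecutive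
gaps are bounded below by a positive constant `Δlo` and above by a finite constant `Δhi`. -/
structure AdmissiblePartition (d : ℕ) where
  /-- nodes in the first variable -/
  x : ℤ → ℝ
  /-- nodes in the `i`-th of the remaining `d` variables -/
  y : Fin d → ℤ → ℝ
  /-- a lower mesh bound -/
  Δlo : ℝ
  /-- an upper mesh bound -/
  Δhi : ℝ
  Δlo_pos : 0 < Δlo
  xgap_lo : ∀ k : ℤ, Δlo ≤ x k - x (k - 1)
  xgap_hi : ∀ k : ℤ, x k - x (k - 1) ≤ Δhi
  ygap_lo : ∀ i, ∀ j : ℤ, Δlo ≤ y i j - y i (j - 1)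
  ygap_hi : ∀ i, ∀ j : ℤ, y i j - y i (j - 1) ≤ Δhi

/-- The half-open cell `Q_{jk} = [x_{k-1}, x_k) × ∏ i, [y_{i,jᵢ-1}, y_{i,jᵢ})` of an
admissible partition. -/
def cell {d : ℕ} (P : AdmissiblePartition d) (k : ℤ) (j : Fin d → ℤ) :
    Set (ℝ × (Fin d → ℝ)) :=
  {z | z.1 ∈ Set.Ico (P.x (k - 1)) (P.x k) ∧
    ∀ i, z.2 i ∈ Set.Ico (P.y i (j i - 1)) (P.y i (j i))}

/-- The volume `Δ_{jk}` of the cell `Q_{jk}`. -/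
def cellVol {d : ℕ} (P : AdmissiblePartition d) (k : ℤ) (j : Fin d → ℤ) : ℝ :=
  (P.x k - P.x (k - 1)) * ∏ i, (P.y i (j i) - P.y i (j i - 1))

/-- The discrete mixed `ℓ^{p,q}(Σ)` norm of `f : ℝ × ℝ^d → ℂ` with respect to an
admissible partition:
`‖f‖ = (∑_k (∑_j sup_{Q_{jk}} |f|^q · Δ_{jk})^{p/q})^{1/p}` (valued in `ℝ≥0∞`). -/
def discNorm (d : ℕ) (p q : ℝ) (P : AdmissiblePartition d)
    (f : ℝ × (Fin d → ℝ) → ℂ) : ℝ≥0∞ :=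
  (∑' k : ℤ, (∑' j : Fin d → ℤ,
      (⨆ z ∈ cell P k j, ENNReal.ofReal ‖f z‖) ^ q *
        ENNReal.ofReal (cellVol P k j)) ^ (p / q)) ^ (1 / p)

/-- Membership in `Λ^{p,q}`: `f` is measurable and has finite discrete mixed norm with
respect to every admissible partition. -/
def MemLambda (d : ℕ) (p q : ℝ) (f : ℝ × (Fin d → ℝ) → ℂ) : Prop :=
  Measurable f ∧ ∀ P : AdmissiblePartition d, discNorm d p q P f < ⊤

namespace MeshAux

def lattice (d : ℕ) (Δ : ℝ) (hΔ : 0 < Δ) : AdmissiblePartition d where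
  x := fun k => (k : ℝ) * Δ
  y := fun _ k => (k : ℝ) * Δ
  Δlo := Δ
  Δhi := Δ
  Δlo_pos := hΔ
  xgap_lo := fun k => le_of_eq (by push_cast; ring)
  xgap_hi := fun k => le_of_eq (by push_cast; ring)
  ygap_lo := fun _ k => le_of_eq (by push_cast; ring)
  ygap_hi := fun _ k => le_of_eq (by push_cast; ring)

lemma lattice_xgap (d : ℕ) (Δ : ℝ) (hΔ : 0 < Δ) (K : ℤ) :
    (lattice d Δ hΔ).x K - (lattice d Δ hΔ).x (K - 1) = Δ := by
  simp only [lattice]; push_cast; ring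

lemma lattice_ygap (d : ℕ) (Δ : ℝ) (hΔ : 0 < Δ) (i : Fin d) (J : ℤ) :
    (lattice d Δ hΔ).y i J - (lattice d Δ hΔ).y i (J - 1) = Δ := by
  simp only [lattice]; push_cast; ring

lemma lattice_cellVol (d : ℕ) (Δ : ℝ) (hΔ : 0 < Δ) (K : ℤ) (J : Fin d → ℤ) :
    cellVol (lattice d Δ hΔ) K J = Δ ^ (d + 1) := by
  unfold cellVol
  rw [show (lattice d Δ hΔ).x K - (lattice d Δ hΔ).x (K - 1) = Δ from lattice_xgap d Δ hΔ K,
    Finset.prod_congr rfl (fun i _ => lattice_ygap d Δ hΔ i (J i))]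
  rw [Finset.prod_const]
  simp [pow_succ]
  ring

lemma lattice_mem (d : ℕ) (Δ : ℝ) (hΔ : 0 < Δ) (z : ℝ × (Fin d → ℝ)) :
    ∃ (K : ℤ) (J : Fin d → ℤ), z ∈ cell (lattice d Δ hΔ) K J := by
  have hfl : ∀ t : ℝ, (⌊t/Δ⌋ : ℝ) * Δ ≤ t ∧ t < ((⌊t/Δ⌋ : ℝ) + 1) * Δ := by
    intro t
    have h1 := Int.floor_le (t/Δ)
    have h2 := Int.lt_floor_add_one (t/Δ)
    constructor
    · calc (⌊t/Δ⌋ : ℝ) * Δ ≤ (t/Δ) * Δ := mul_le_mul_of_nonneg_right h1 hΔ.le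
        _ = t := div_mul_cancel₀ t hΔ.ne'
    · calc t = (t/Δ) * Δ := (div_mul_cancel₀ t hΔ.ne').symm
        _ < ((⌊t/Δ⌋ : ℝ) + 1) * Δ := mul_lt_mul_of_pos_right h2 hΔ
  refine ⟨⌊z.1/Δ⌋ + 1, fun i => ⌊z.2 i/Δ⌋ + 1, ?_, ?_⟩
  · simp only [lattice]
    constructor
    · push_cast
      simpa using (hfl z.1).1
    · push_cast
      simpa using (hfl z.1).2
  · intro i
    simp only [lattice]
    constructor
    · push_cast
      simpa using (hfl (z.2 i)).1
    · push_cast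
      simpa using (hfl (z.2 i)).2



open Classical in
noncomputable def indE (s : Prop) : ℝ≥0∞ := if s then 1 else 0

lemma indE_of {s : Prop} (h : s) : indE s = 1 := by simp [indE, h]
lemma indE_of_not {s : Prop} (h : ¬ s) : indE s = 0 := by simp [indE, h]
lemma indE_le_one (s : Prop) : indE s ≤ 1 := by
  by_cases h : s <;> simp [indE, h]
lemma indE_ne_zero {s : Prop} (h : indE s ≠ 0) : s := by
  by_contra hs; exact h (indE_of_not hs)
lemma indE_mul_rpow (s : Prop) (X : ℝ≥0∞) {r : ℝ} (hr : 0 < r) :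
    (indE s * X) ^ r ≤ indE s * X ^ r := by
  by_cases h : s
  · simp [indE, h]
  · simp [indE, h, ENNReal.zero_rpow_of_pos hr]

lemma telescope (u : ℤ → ℝ) (δ : ℝ) (hu : ∀ k, δ ≤ u k - u (k-1)) (k : ℤ) :
    ∀ m : ℤ, k ≤ m → ((m - k : ℤ) : ℝ) * δ ≤ u m - u k := by
  refine Int.le_induction ?_ ?_
  · simp
  · intro n hn ih
    have h1 := hu (n+1)
    have e1 : (n + 1 : ℤ) - 1 = n := by ring
    rw [e1] at h1
    have e2 : ((n + 1 - k : ℤ) : ℝ) * δ = ((n - k : ℤ) : ℝ) * δ + δ := by push_cast; ring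
    rw [e2]; linarith

lemma count (u : ℤ → ℝ) (δ : ℝ) (hδ : 0 < δ) (hu : ∀ k, δ ≤ u k - u (k-1))
    (a b : ℝ) :
    ∃ F : Finset ℤ, F.card ≤ 2 * (⌈(b - a) / δ⌉₊ + 1) + 1 ∧
      ∀ k : ℤ, (Set.Ico (u (k-1)) (u k) ∩ Set.Ico a b).Nonempty → k ∈ F := by
  set M : ℤ := (⌈(b - a) / δ⌉₊ : ℤ) + 1 with hM
  have key : ∀ k k' : ℤ,
      (Set.Ico (u (k-1)) (u k) ∩ Set.Ico a b).Nonempty →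
      (Set.Ico (u (k'-1)) (u k') ∩ Set.Ico a b).Nonempty → k' - k ≤ M := by
    rintro k k' ⟨t, ⟨ht1, ht2⟩, ht3, ht4⟩ ⟨s, ⟨hs1, hs2⟩, hs3, hs4⟩
    by_cases hkk : k' ≤ k
    · omega
    · push_neg at hkk
      have hk1 : k ≤ k' - 1 := by omega
      have h1 := telescope u δ hu k (k'-1) hk1
      have h2 : u (k'-1) - u k < b - a := by
        have e1 : a < u k := lt_of_le_of_lt ht3 ht2
        have e2 : u (k'-1) < b := lt_of_le_of_lt hs1 hs4
        linarith
      have h3 : ((k' - 1 - k : ℤ) : ℝ) ≤ (b - a) / δ := by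
        rw [le_div_iff₀ hδ]; linarith
      have h4 : ((k' - 1 - k : ℤ) : ℝ) ≤ (⌈(b - a) / δ⌉₊ : ℝ) := h3.trans (Nat.le_ceil _)
      have h5 : k' - 1 - k ≤ (⌈(b - a) / δ⌉₊ : ℤ) := by exact_mod_cast h4
      omega
  by_cases hne : ∃ k0 : ℤ, (Set.Ico (u (k0-1)) (u k0) ∩ Set.Ico a b).Nonempty
  · obtain ⟨k0, hk0⟩ := hne
    refine ⟨Finset.Icc (k0 - M) (k0 + M), ?_, ?_⟩
    · rw [Int.card_Icc]
      omega
    · intro k hk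
      have h1 := key k0 k hk0 hk
      have h2 := key k k0 hk hk0
      simp only [Finset.mem_Icc]; omega
  · exact ⟨∅, by simp, fun k hk => absurd ⟨k, hk⟩ hne⟩

lemma tsum_le_of_support {ι : Type*} {g : ι → ℝ≥0∞} {F : Finset ι}
    (h : ∀ k, g k ≠ 0 → k ∈ F) {c : ℝ≥0∞} (hc : ∀ k, g k ≤ c) :
    ∑' k, g k ≤ F.card * c := by
  rw [tsum_eq_sum (s := F) (fun b hb => Classical.byContradiction fun hb' => hb (h b hb'))]
  calc ∑ k ∈ F, g k ≤ ∑ k ∈ F, c := Finset.sum_le_sum fun k _ => hc k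
    _ = F.card * c := by rw [Finset.sum_const, nsmul_eq_mul]

lemma rpow_tsum_le_of_support {ι : Type*} {g : ι → ℝ≥0∞} {F : Finset ι}
    (h : ∀ k, g k ≠ 0 → k ∈ F) {r : ℝ} (hr : 0 < r) :
    (∑' k, g k) ^ r ≤ (F.card : ℝ≥0∞) ^ r * ∑' k, g k ^ r := by
  rcases F.eq_empty_or_nonempty with hF | hF
  · have hg : ∀ k, g k = 0 := fun k =>
      Classical.byContradiction fun hk => by simpa [hF] using h k hk
    simp [hg, ENNReal.zero_rpow_of_pos hr]
  · obtain ⟨k0, hk0, hmax⟩ := F.exists_max_image g hF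
    have h1 : ∑' k, g k = ∑ k ∈ F, g k :=
      tsum_eq_sum (fun b hb => Classical.byContradiction fun hb' => hb (h b hb'))
    have h2 : ∑ k ∈ F, g k ≤ F.card * g k0 := by
      calc ∑ k ∈ F, g k ≤ ∑ k ∈ F, g k0 := Finset.sum_le_sum fun k hk => hmax k hk
        _ = F.card * g k0 := by rw [Finset.sum_const, nsmul_eq_mul]
    calc (∑' k, g k) ^ r ≤ ((F.card : ℝ≥0∞) * g k0) ^ r :=
          ENNReal.rpow_le_rpow (h1 ▸ h2) hr.le
      _ = (F.card : ℝ≥0∞) ^ r * g k0 ^ r := ENNReal.mul_rpow_of_nonneg _ _ hr.le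
      _ ≤ (F.card : ℝ≥0∞) ^ r * ∑' k, g k ^ r :=
          mul_le_mul_right (ENNReal.le_tsum k0) _

lemma pi_tsum_le {d : ℕ} (h : Fin d → ℤ → ℝ≥0∞) (F : Fin d → Finset ℤ)
    (hs : ∀ i m, h i m ≠ 0 → m ∈ F i) {c : ℝ≥0∞} (hc : ∀ i m, h i m ≤ c)
    {n : ℕ} (hcard : ∀ i, (F i).card ≤ n) :
    ∑' j : Fin d → ℤ, ∏ i, h i (j i) ≤ (n : ℝ≥0∞) ^ d * c ^ d := by
  have h0 : ∀ j : Fin d → ℤ, j ∉ Fintype.piFinset F → ∏ i, h i (j i) = 0 := by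
    intro j hj
    rw [Fintype.mem_piFinset] at hj
    push_neg at hj
    obtain ⟨i, hi⟩ := hj
    exact Finset.prod_eq_zero (Finset.mem_univ i)
      (Classical.byContradiction fun hne => hi (hs i (j i) hne))
  rw [tsum_eq_sum h0]
  calc ∑ j ∈ Fintype.piFinset F, ∏ i, h i (j i)
      ≤ ∑ _j ∈ Fintype.piFinset F, c ^ d := by
        refine Finset.sum_le_sum fun j _ => ?_
        calc ∏ i, h i (j i) ≤ ∏ _i : Fin d, c := Finset.prod_le_prod' fun i _ => hc i (j i)
          _ = c ^ d := by simp
    _ = (Fintype.piFinset F).card * c ^ d := by rw [Finset.sum_const, nsmul_eq_mul]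
    _ ≤ (n : ℝ≥0∞) ^ d * c ^ d := by
        have hcard2 : (Fintype.piFinset F).card ≤ n ^ d := by
          rw [Fintype.card_piFinset]
          calc ∏ i, (F i).card ≤ ∏ _i : Fin d, n :=
                Finset.prod_le_prod' fun i _ => hcard i
            _ = n ^ d := by simp
        have : ((Fintype.piFinset F).card : ℝ≥0∞) ≤ (n : ℝ≥0∞) ^ d := by
          calc ((Fintype.piFinset F).card : ℝ≥0∞) ≤ ((n ^ d : ℕ) : ℝ≥0∞) :=
                Nat.cast_le.mpr hcard2
            _ = (n : ℝ≥0∞) ^ d := by push_cast; ring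
        exact mul_le_mul_left this _


/-- the `q`-th power of the sup of `|f|` over a cell -/
def Ssup (d : ℕ) (q : ℝ) (f : ℝ × (Fin d → ℝ) → ℂ) (P : AdmissiblePartition d)
    (K : ℤ) (J : Fin d → ℤ) : ℝ≥0∞ :=
  (⨆ z ∈ cell P K J, ENNReal.ofReal ‖f z‖) ^ q

lemma discNorm_eq (d : ℕ) (p q : ℝ) (P : AdmissiblePartition d)
    (f : ℝ × (Fin d → ℝ) → ℂ) :
    discNorm d p q P f =
      (∑' k : ℤ, (∑' j : Fin d → ℤ,
        Ssup d q f P k j * ENNReal.ofReal (cellVol P k j)) ^ (p / q)) ^ (1 / p) := rfl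


lemma main_bound (d : ℕ) (p q : ℝ) (hp : 1 ≤ p) (hq : 1 ≤ q)
    (f : ℝ × (Fin d → ℝ) → ℂ) (Δs : ℝ) (hΔs : 0 < Δs)
    (P : AdmissiblePartition d)
    (hfin : discNorm d p q (lattice d Δs hΔs) f < ⊤) :
    discNorm d p q P f < ⊤ := by
  set P0 := lattice d Δs hΔs with hP0
  have hq0 : (0:ℝ) < q := lt_of_lt_of_le one_pos hq
  have hp0 : (0:ℝ) < p := lt_of_lt_of_le one_pos hp
  have hr : (0:ℝ) < p / q := div_pos hp0 hq0
  have hΔlohi : P.Δlo ≤ P.Δhi := le_trans (P.xgap_lo 0) (P.xgap_hi 0)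
  have hΔhi0 : (0:ℝ) < P.Δhi := lt_of_lt_of_le P.Δlo_pos hΔlohi
  -- the lattice sums
  set U : ℤ → ℝ≥0∞ := fun K => ∑' J : Fin d → ℤ, Ssup d q f P0 K J with hU
  -- Step 1: finiteness of the lattice sums
  have hT : ∑' K : ℤ, (U K) ^ (p / q) < ⊤ := by
    set c0 : ℝ≥0∞ := ENNReal.ofReal (Δs ^ (d+1)) with hc0
    have hc0ne : c0 ≠ 0 := by
      rw [hc0]
      exact (ENNReal.ofReal_pos.mpr (by positivity)).ne'
    have hc0top : c0 ≠ ⊤ := ENNReal.ofReal_ne_top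
    have heq : discNorm d p q P0 f = (∑' K : ℤ, (U K * c0) ^ (p / q)) ^ (1 / p) := by
      rw [discNorm_eq]
      congr 1
      refine tsum_congr fun K => ?_
      congr 1
      rw [hU, ← ENNReal.tsum_mul_right]
      refine tsum_congr fun J => ?_
      congr 1
      rw [hc0, hP0, lattice_cellVol]
    rw [heq] at hfin
    have hfin2 : ∑' K : ℤ, (U K * c0) ^ (p / q) < ⊤ :=
      (ENNReal.rpow_lt_top_iff_of_pos (by positivity)).mp hfin
    have hle : ∀ K : ℤ, (U K) ^ (p/q) ≤ (c0⁻¹) ^ (p/q) * (U K * c0) ^ (p/q) := by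
      intro K
      rw [← ENNReal.mul_rpow_of_nonneg _ _ hr.le]
      refine ENNReal.rpow_le_rpow (le_of_eq ?_) hr.le
      rw [mul_comm (U K) c0, ← mul_assoc, ENNReal.inv_mul_cancel hc0ne hc0top, one_mul]
    calc ∑' K : ℤ, (U K)^(p/q) ≤ ∑' K : ℤ, (c0⁻¹)^(p/q) * (U K * c0)^(p/q) :=
          ENNReal.tsum_le_tsum hle
      _ = (c0⁻¹)^(p/q) * ∑' K : ℤ, (U K * c0)^(p/q) := ENNReal.tsum_mul_left
      _ < ⊤ := (ENNReal.mul_ne_top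
          (ENNReal.rpow_ne_top_of_nonneg hr.le (ENNReal.inv_ne_top.mpr hc0ne))
          hfin2.ne).lt_top
  -- Step 2: counting families
  set Mx : ℕ := 2 * (⌈Δs / P.Δlo⌉₊ + 1) + 1 with hMx
  set Nx : ℕ := 2 * (⌈P.Δhi / Δs⌉₊ + 1) + 1 with hNx
  obtain ⟨Fy, hFycard, hFymem⟩ :
      ∃ Fy : Fin d → ℤ → Finset ℤ, (∀ i J, (Fy i J).card ≤ Mx) ∧
        ∀ (i : Fin d) (J m : ℤ),
          (Set.Ico (P.y i (m-1)) (P.y i m) ∩ Set.Ico (P0.y i (J-1)) (P0.y i J)).Nonempty →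
            m ∈ Fy i J := by
    have h := fun (i : Fin d) (J : ℤ) =>
      count (P.y i) P.Δlo P.Δlo_pos (P.ygap_lo i) (P0.y i (J-1)) (P0.y i J)
    choose F h1 h2 using h
    refine ⟨F, fun i J => le_trans (h1 i J) ?_, h2⟩
    have hg : P0.y i J - P0.y i (J-1) = Δs := by rw [hP0]; exact lattice_ygap d Δs hΔs i J
    rw [hg, hMx]
  obtain ⟨Fx, hFxcard, hFxmem⟩ :
      ∃ Fx : ℤ → Finset ℤ, (∀ K, (Fx K).card ≤ Mx) ∧
        ∀ (K k : ℤ),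
          (Set.Ico (P.x (k-1)) (P.x k) ∩ Set.Ico (P0.x (K-1)) (P0.x K)).Nonempty →
            k ∈ Fx K := by
    have h := fun (K : ℤ) =>
      count P.x P.Δlo P.Δlo_pos P.xgap_lo (P0.x (K-1)) (P0.x K)
    choose F h1 h2 using h
    refine ⟨F, fun K => le_trans (h1 K) ?_, h2⟩
    have hg : P0.x K - P0.x (K-1) = Δs := by rw [hP0]; exact lattice_xgap d Δs hΔs K
    rw [hg, hMx]
  obtain ⟨Gx, hGxcard, hGxmem⟩ :
      ∃ Gx : ℤ → Finset ℤ, (∀ k, (Gx k).card ≤ Nx) ∧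
        ∀ (k K : ℤ),
          (Set.Ico (P0.x (K-1)) (P0.x K) ∩ Set.Ico (P.x (k-1)) (P.x k)).Nonempty →
            K ∈ Gx k := by
    have hu : ∀ K : ℤ, Δs ≤ P0.x K - P0.x (K-1) := by
      intro K
      rw [hP0, lattice_xgap d Δs hΔs K]
    have h := fun (k : ℤ) =>
      count P0.x Δs hΔs hu (P.x (k-1)) (P.x k)
    choose F h1 h2 using h
    refine ⟨F, fun k => le_trans (h1 k) ?_, h2⟩
    rw [hNx]
    have hle : (P.x k - P.x (k-1)) / Δs ≤ P.Δhi / Δs :=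
      div_le_div_of_nonneg_right (P.xgap_hi k) hΔs.le
    have := Nat.ceil_le_ceil (R := ℝ) hle
    omega
  -- constant
  set c1 : ℝ≥0∞ :=
    ENNReal.ofReal P.Δhi * ((Mx : ℝ≥0∞) ^ d * (ENNReal.ofReal P.Δhi) ^ d) with hc1
  have hc1top : c1 ≠ ⊤ := by
    rw [hc1]
    exact ENNReal.mul_ne_top ENNReal.ofReal_ne_top
      (ENNReal.mul_ne_top (ENNReal.pow_ne_top (ENNReal.natCast_ne_top _))
        (ENNReal.pow_ne_top ENNReal.ofReal_ne_top))
  -- Step 3: sup-cover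
  have fact1 : ∀ (k : ℤ) (j : Fin d → ℤ),
      Ssup d q f P k j ≤ ∑' KJ : ℤ × (Fin d → ℤ),
        indE ((cell P k j ∩ cell P0 KJ.1 KJ.2).Nonempty) * Ssup d q f P0 KJ.1 KJ.2 := by
    intro k j
    set R := ∑' KJ : ℤ × (Fin d → ℤ),
      indE ((cell P k j ∩ cell P0 KJ.1 KJ.2).Nonempty) * Ssup d q f P0 KJ.1 KJ.2 with hR
    have hbase : (⨆ z ∈ cell P k j, ENNReal.ofReal ‖f z‖) ≤ R ^ (1/q) := by
      refine iSup₂_le fun z hz => ?_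
      obtain ⟨K, J, hzK⟩ := lattice_mem d Δs hΔs z
      rw [← hP0] at hzK
      have hne : (cell P k j ∩ cell P0 K J).Nonempty := ⟨z, hz, hzK⟩
      have h1 : ENNReal.ofReal ‖f z‖ ^ q ≤ Ssup d q f P0 K J := by
        refine ENNReal.rpow_le_rpow ?_ hq0.le
        exact le_iSup₂ (f := fun (z' : ℝ × (Fin d → ℝ)) (_ : z' ∈ cell P0 K J) =>
          ENNReal.ofReal ‖f z'‖) z hzK
      have h2 : Ssup d q f P0 K J ≤ R := by
        have h3 := ENNReal.le_tsum (f := fun KJ : ℤ × (Fin d → ℤ) =>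
          indE ((cell P k j ∩ cell P0 KJ.1 KJ.2).Nonempty) * Ssup d q f P0 KJ.1 KJ.2) (K, J)
        rw [hR]
        simpa [indE_of hne] using h3
      have h4 : ENNReal.ofReal ‖f z‖ ^ q ≤ R := h1.trans h2
      calc ENNReal.ofReal ‖f z‖ = (ENNReal.ofReal ‖f z‖ ^ q) ^ (1/q) := by
            rw [← ENNReal.rpow_mul, mul_one_div, div_self hq0.ne', ENNReal.rpow_one]
        _ ≤ R ^ (1/q) := ENNReal.rpow_le_rpow h4 (by positivity)
    calc Ssup d q f P k j ≤ (R ^ (1/q)) ^ q := ENNReal.rpow_le_rpow hbase hq0.le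
      _ = R := by rw [← ENNReal.rpow_mul, one_div_mul_cancel hq0.ne', ENNReal.rpow_one]
  -- Step 4: the cell-volume comparison
  have fact2 : ∀ (k : ℤ) (j : Fin d → ℤ) (K : ℤ) (J : Fin d → ℤ),
      indE ((cell P k j ∩ cell P0 K J).Nonempty) * ENNReal.ofReal (cellVol P k j) ≤
        indE ((Set.Ico (P.x (k-1)) (P.x k) ∩ Set.Ico (P0.x (K-1)) (P0.x K)).Nonempty) *
          ENNReal.ofReal P.Δhi *
          ∏ i, (indE ((Set.Ico (P.y i (j i - 1)) (P.y i (j i)) ∩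
              Set.Ico (P0.y i (J i - 1)) (P0.y i (J i))).Nonempty) *
            ENNReal.ofReal (P.y i (j i) - P.y i (j i - 1))) := by
    intro k j K J
    by_cases hne : (cell P k j ∩ cell P0 K J).Nonempty
    · obtain ⟨z, hz1, hz2⟩ := hne
      have hX : (Set.Ico (P.x (k-1)) (P.x k) ∩ Set.Ico (P0.x (K-1)) (P0.x K)).Nonempty :=
        ⟨z.1, hz1.1, hz2.1⟩
      have hY : ∀ i, (Set.Ico (P.y i (j i - 1)) (P.y i (j i)) ∩
          Set.Ico (P0.y i (J i - 1)) (P0.y i (J i))).Nonempty :=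
        fun i => ⟨z.2 i, hz1.2 i, hz2.2 i⟩
      rw [indE_of ⟨z, hz1, hz2⟩, indE_of hX,
        Finset.prod_congr rfl (fun i _ => by rw [indE_of (hY i), one_mul])]
      simp only [one_mul]
      rw [cellVol, ENNReal.ofReal_mul (le_trans P.Δlo_pos.le (P.xgap_lo k)),
        ENNReal.ofReal_prod_of_nonneg
          (fun i _ => le_trans P.Δlo_pos.le (P.ygap_lo i (j i)))]
      exact mul_le_mul_left (ENNReal.ofReal_le_ofReal (P.xgap_hi k)) _
    · rw [indE_of_not hne, zero_mul]
      exact zero_le'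
  -- Step 5: summing over fine cells inside one coarse cell
  have fact3 : ∀ (k K : ℤ) (J : Fin d → ℤ),
      ∑' j : Fin d → ℤ,
        indE ((cell P k j ∩ cell P0 K J).Nonempty) * ENNReal.ofReal (cellVol P k j) ≤
      indE ((Set.Ico (P.x (k-1)) (P.x k) ∩ Set.Ico (P0.x (K-1)) (P0.x K)).Nonempty) * c1 := by
    intro k K J
    have step3 : ∑' j : Fin d → ℤ,
        ∏ i, (indE ((Set.Ico (P.y i (j i - 1)) (P.y i (j i)) ∩
            Set.Ico (P0.y i (J i - 1)) (P0.y i (J i))).Nonempty) *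
          ENNReal.ofReal (P.y i (j i) - P.y i (j i - 1))) ≤
        (Mx : ℝ≥0∞) ^ d * (ENNReal.ofReal P.Δhi) ^ d := by
      refine pi_tsum_le (fun i m => indE ((Set.Ico (P.y i (m-1)) (P.y i m) ∩
          Set.Ico (P0.y i (J i - 1)) (P0.y i (J i))).Nonempty) *
          ENNReal.ofReal (P.y i m - P.y i (m-1))) (fun i => Fy i (J i)) ?_ ?_ ?_
      · intro i m hm
        exact hFymem i (J i) m (indE_ne_zero fun h0 => hm (by simp [h0]))
      · intro i m
        calc indE _ * ENNReal.ofReal (P.y i m - P.y i (m-1)) ≤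
              1 * ENNReal.ofReal P.Δhi :=
            mul_le_mul' (indE_le_one _) (ENNReal.ofReal_le_ofReal (P.ygap_hi i m))
          _ = ENNReal.ofReal P.Δhi := one_mul _
      · exact fun i => hFycard i (J i)
    calc ∑' j : Fin d → ℤ,
        indE ((cell P k j ∩ cell P0 K J).Nonempty) * ENNReal.ofReal (cellVol P k j)
        ≤ ∑' j : Fin d → ℤ,
          indE ((Set.Ico (P.x (k-1)) (P.x k) ∩ Set.Ico (P0.x (K-1)) (P0.x K)).Nonempty) *
            ENNReal.ofReal P.Δhi *
            ∏ i, (indE ((Set.Ico (P.y i (j i - 1)) (P.y i (j i)) ∩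
                Set.Ico (P0.y i (J i - 1)) (P0.y i (J i))).Nonempty) *
              ENNReal.ofReal (P.y i (j i) - P.y i (j i - 1))) :=
          ENNReal.tsum_le_tsum fun j => fact2 k j K J
      _ = indE ((Set.Ico (P.x (k-1)) (P.x k) ∩ Set.Ico (P0.x (K-1)) (P0.x K)).Nonempty) *
            ENNReal.ofReal P.Δhi *
            ∑' j : Fin d → ℤ,
            ∏ i, (indE ((Set.Ico (P.y i (j i - 1)) (P.y i (j i)) ∩
                Set.Ico (P0.y i (J i - 1)) (P0.y i (J i))).Nonempty) *
              ENNReal.ofReal (P.y i (j i) - P.y i (j i - 1))) := ENNReal.tsum_mul_left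
      _ ≤ indE ((Set.Ico (P.x (k-1)) (P.x k) ∩ Set.Ico (P0.x (K-1)) (P0.x K)).Nonempty) *
            ENNReal.ofReal P.Δhi * ((Mx : ℝ≥0∞) ^ d * (ENNReal.ofReal P.Δhi) ^ d) :=
          mul_le_mul_right step3 _
      _ = indE ((Set.Ico (P.x (k-1)) (P.x k) ∩ Set.Ico (P0.x (K-1)) (P0.x K)).Nonempty) * c1 := by
          rw [hc1, mul_assoc]
  -- Step 6: inner-sum bound
  have fact4 : ∀ k : ℤ,
      ∑' j : Fin d → ℤ, Ssup d q f P k j * ENNReal.ofReal (cellVol P k j) ≤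
        ∑' K : ℤ,
          indE ((Set.Ico (P.x (k-1)) (P.x k) ∩ Set.Ico (P0.x (K-1)) (P0.x K)).Nonempty) *
            (c1 * U K) := by
    intro k
    calc ∑' j : Fin d → ℤ, Ssup d q f P k j * ENNReal.ofReal (cellVol P k j)
        ≤ ∑' j : Fin d → ℤ, (∑' KJ : ℤ × (Fin d → ℤ),
            indE ((cell P k j ∩ cell P0 KJ.1 KJ.2).Nonempty) * Ssup d q f P0 KJ.1 KJ.2) *
            ENNReal.ofReal (cellVol P k j) :=
          ENNReal.tsum_le_tsum fun j => mul_le_mul_left (fact1 k j) _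
      _ = ∑' j : Fin d → ℤ, ∑' KJ : ℤ × (Fin d → ℤ),
            indE ((cell P k j ∩ cell P0 KJ.1 KJ.2).Nonempty) * Ssup d q f P0 KJ.1 KJ.2 *
            ENNReal.ofReal (cellVol P k j) :=
          tsum_congr fun j => (ENNReal.tsum_mul_right).symm
      _ = ∑' KJ : ℤ × (Fin d → ℤ), ∑' j : Fin d → ℤ,
            indE ((cell P k j ∩ cell P0 KJ.1 KJ.2).Nonempty) * Ssup d q f P0 KJ.1 KJ.2 *
            ENNReal.ofReal (cellVol P k j) := ENNReal.tsum_comm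
      _ = ∑' K : ℤ, ∑' J : Fin d → ℤ, ∑' j : Fin d → ℤ,
            indE ((cell P k j ∩ cell P0 K J).Nonempty) * Ssup d q f P0 K J *
            ENNReal.ofReal (cellVol P k j) :=
          ENNReal.tsum_prod (f := fun (K : ℤ) (J : Fin d → ℤ) => ∑' j : Fin d → ℤ,
            indE ((cell P k j ∩ cell P0 K J).Nonempty) * Ssup d q f P0 K J *
            ENNReal.ofReal (cellVol P k j))
      _ ≤ ∑' K : ℤ,
            indE ((Set.Ico (P.x (k-1)) (P.x k) ∩ Set.Ico (P0.x (K-1)) (P0.x K)).Nonempty) *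
            (c1 * U K) := by
          refine ENNReal.tsum_le_tsum fun K => ?_
          calc ∑' J : Fin d → ℤ, ∑' j : Fin d → ℤ,
              indE ((cell P k j ∩ cell P0 K J).Nonempty) * Ssup d q f P0 K J *
              ENNReal.ofReal (cellVol P k j)
              = ∑' J : Fin d → ℤ, Ssup d q f P0 K J * ∑' j : Fin d → ℤ,
                indE ((cell P k j ∩ cell P0 K J).Nonempty) *
                ENNReal.ofReal (cellVol P k j) := by
                refine tsum_congr fun J => ?_
                rw [← ENNReal.tsum_mul_left]
                exact tsum_congr fun j => by ring
            _ ≤ ∑' J : Fin d → ℤ, Ssup d q f P0 K J *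
                (indE ((Set.Ico (P.x (k-1)) (P.x k) ∩
                  Set.Ico (P0.x (K-1)) (P0.x K)).Nonempty) * c1) :=
                ENNReal.tsum_le_tsum fun J => mul_le_mul_right (fact3 k K J) _
            _ = (∑' J : Fin d → ℤ, Ssup d q f P0 K J) *
                (indE ((Set.Ico (P.x (k-1)) (P.x k) ∩
                  Set.Ico (P0.x (K-1)) (P0.x K)).Nonempty) * c1) := ENNReal.tsum_mul_right
            _ = indE ((Set.Ico (P.x (k-1)) (P.x k) ∩
                  Set.Ico (P0.x (K-1)) (P0.x K)).Nonempty) * (c1 * U K) := by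
                rw [hU]; ring
  -- Step 7: rpow of inner sum
  have fact5 : ∀ k : ℤ,
      (∑' j : Fin d → ℤ, Ssup d q f P k j * ENNReal.ofReal (cellVol P k j)) ^ (p/q) ≤
        (Nx : ℝ≥0∞) ^ (p/q) * ∑' K : ℤ,
          indE ((Set.Ico (P.x (k-1)) (P.x k) ∩ Set.Ico (P0.x (K-1)) (P0.x K)).Nonempty) *
            (c1 * U K) ^ (p/q) := by
    intro k
    have h1 := ENNReal.rpow_le_rpow (fact4 k) hr.le
    have h2 : (∑' K : ℤ,
        indE ((Set.Ico (P.x (k-1)) (P.x k) ∩ Set.Ico (P0.x (K-1)) (P0.x K)).Nonempty) *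
          (c1 * U K)) ^ (p/q) ≤
        ((Gx k).card : ℝ≥0∞) ^ (p/q) * ∑' K : ℤ,
          (indE ((Set.Ico (P.x (k-1)) (P.x k) ∩ Set.Ico (P0.x (K-1)) (P0.x K)).Nonempty) *
            (c1 * U K)) ^ (p/q) := by
      refine rpow_tsum_le_of_support (F := Gx k) ?_ hr
      intro K hK
      have hne : indE ((Set.Ico (P.x (k-1)) (P.x k) ∩
          Set.Ico (P0.x (K-1)) (P0.x K)).Nonempty) ≠ 0 := by
        intro h0; exact hK (by rw [h0, zero_mul])
      obtain ⟨t, ht1, ht2⟩ := indE_ne_zero hne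
      exact hGxmem k K ⟨t, ht2, ht1⟩
    have h3 : ∑' K : ℤ,
        (indE ((Set.Ico (P.x (k-1)) (P.x k) ∩ Set.Ico (P0.x (K-1)) (P0.x K)).Nonempty) *
          (c1 * U K)) ^ (p/q) ≤
        ∑' K : ℤ,
          indE ((Set.Ico (P.x (k-1)) (P.x k) ∩ Set.Ico (P0.x (K-1)) (P0.x K)).Nonempty) *
          (c1 * U K) ^ (p/q) :=
      ENNReal.tsum_le_tsum fun K => indE_mul_rpow _ _ hr
    have h4 : ((Gx k).card : ℝ≥0∞) ^ (p/q) ≤ (Nx : ℝ≥0∞) ^ (p/q) :=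
      ENNReal.rpow_le_rpow (Nat.cast_le.mpr (hGxcard k)) hr.le
    exact le_trans h1 (le_trans h2 (mul_le_mul' h4 h3))
  -- Step 8: conclusion
  have hfinal : ∑' k : ℤ,
      (∑' j : Fin d → ℤ, Ssup d q f P k j * ENNReal.ofReal (cellVol P k j)) ^ (p/q) < ⊤ := by
    have h7 : ∀ K : ℤ, (∑' k : ℤ,
        indE ((Set.Ico (P.x (k-1)) (P.x k) ∩ Set.Ico (P0.x (K-1)) (P0.x K)).Nonempty)) ≤
        (Mx : ℝ≥0∞) := by
      intro K
      have hsupp : ∀ k : ℤ,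
          indE ((Set.Ico (P.x (k-1)) (P.x k) ∩ Set.Ico (P0.x (K-1)) (P0.x K)).Nonempty) ≠ 0 →
          k ∈ Fx K := fun k hk => hFxmem K k (indE_ne_zero hk)
      calc ∑' k : ℤ,
          indE ((Set.Ico (P.x (k-1)) (P.x k) ∩ Set.Ico (P0.x (K-1)) (P0.x K)).Nonempty)
          ≤ ((Fx K).card : ℝ≥0∞) * 1 :=
            tsum_le_of_support hsupp (fun k => indE_le_one _)
        _ ≤ (Mx : ℝ≥0∞) := by
            rw [mul_one]; exact_mod_cast hFxcard K
    calc ∑' k : ℤ,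
        (∑' j : Fin d → ℤ, Ssup d q f P k j * ENNReal.ofReal (cellVol P k j)) ^ (p/q)
        ≤ ∑' k : ℤ, (Nx : ℝ≥0∞) ^ (p/q) * ∑' K : ℤ,
            indE ((Set.Ico (P.x (k-1)) (P.x k) ∩ Set.Ico (P0.x (K-1)) (P0.x K)).Nonempty) *
              (c1 * U K) ^ (p/q) := ENNReal.tsum_le_tsum fact5
      _ = (Nx : ℝ≥0∞) ^ (p/q) * ∑' k : ℤ, ∑' K : ℤ,
            indE ((Set.Ico (P.x (k-1)) (P.x k) ∩ Set.Ico (P0.x (K-1)) (P0.x K)).Nonempty) *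
              (c1 * U K) ^ (p/q) := ENNReal.tsum_mul_left
      _ = (Nx : ℝ≥0∞) ^ (p/q) * ∑' K : ℤ, (∑' k : ℤ,
            indE ((Set.Ico (P.x (k-1)) (P.x k) ∩ Set.Ico (P0.x (K-1)) (P0.x K)).Nonempty)) *
              (c1 * U K) ^ (p/q) := by
          congr 1
          rw [ENNReal.tsum_comm]
          exact tsum_congr fun K => ENNReal.tsum_mul_right
      _ ≤ (Nx : ℝ≥0∞) ^ (p/q) * ∑' K : ℤ, (Mx : ℝ≥0∞) * (c1 * U K) ^ (p/q) :=
          mul_le_mul_right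
            (ENNReal.tsum_le_tsum fun K => mul_le_mul_left (h7 K) _) _
      _ = (Nx : ℝ≥0∞) ^ (p/q) * ((Mx : ℝ≥0∞) * (c1 ^ (p/q) * ∑' K : ℤ, (U K) ^ (p/q))) := by
          congr 1
          rw [ENNReal.tsum_mul_left]
          congr 1
          rw [← ENNReal.tsum_mul_left]
          exact tsum_congr fun K => ENNReal.mul_rpow_of_nonneg _ _ hr.le
      _ < ⊤ := by
          refine (ENNReal.mul_ne_top ?_ (ENNReal.mul_ne_top ?_ (ENNReal.mul_ne_top ?_ hT.ne))).lt_top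
          · exact ENNReal.rpow_ne_top_of_nonneg hr.le (ENNReal.natCast_ne_top _)
          · exact ENNReal.natCast_ne_top _
          · exact ENNReal.rpow_ne_top_of_nonneg hr.le hc1top
  rw [discNorm_eq]
  exact ENNReal.rpow_lt_top_of_nonneg (by positivity) hfinal.ne

end MeshAux

/-- a measurable `f : ℝ × ℝ^d → ℂ` belongs to `Λ^{p,q}` if and only if there
exists `Δ* > 0` such that `‖f‖_{ℓ^{p,q}(Σ)} < ∞` for every admissible partition `Σ` whose
lower mesh size is at least `Δ*` (i.e. all of whose gaps are at least `Δ*`). -/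
theorem memLambda_iff_exists_meshLowerBound
    (d : ℕ) (hd : 1 ≤ d) (p q : ℝ) (hp : 1 ≤ p) (hq : 1 ≤ q)
    (f : ℝ × (Fin d → ℝ) → ℂ) (hmeas : Measurable f) :
    MemLambda d p q f ↔
      ∃ Δs : ℝ, 0 < Δs ∧ ∀ P : AdmissiblePartition d,
        ((∀ k : ℤ, Δs ≤ P.x k - P.x (k - 1)) ∧
          ∀ i, ∀ j : ℤ, Δs ≤ P.y i j - P.y i (j - 1)) →
        discNorm d p q P f < ⊤ := by
  constructor
  · rintro ⟨-, h⟩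
    exact ⟨1, one_pos, fun P _ => h P⟩
  · rintro ⟨Δs, hΔs, h⟩
    refine ⟨hmeas, fun P => ?_⟩
    have hlat : discNorm d p q (MeshAux.lattice d Δs hΔs) f < ⊤ := by
      refine h _ ⟨fun K => ?_, fun i J => ?_⟩
      · exact (MeshAux.lattice_xgap d Δs hΔs K).ge
      · exact (MeshAux.lattice_ygap d Δs hΔs i J).ge
    exact MeshAux.main_bound d p q hp hq f Δs hΔs P hlat
end
end
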